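/- arXiv:2209.14278 — 7 statements merged into one kernel-verified Lean document; each statement's English description precedes it below -/
import Mathlib

section
/- Let L ∈ ℕ and let A : ℝ → ℂ be given by A(x) = Σ_{j=−2L}^{2L} a_j e^{ijx/2} with coefficients a_j ∈ ℂ, and suppose that A(x) is real and A(x) ≥ 0 for every x ∈ ℝ. Then there exist complex numbers q_{−L}, …, q_L such that the Laurent polynomial Q(x) = Σ_{j=−L}^{L} q_j e^{ijx/2} satisfies Q(x)·conj(Q(x)) = A(x) for all x ∈ ℝ. -/
/-!
With `w = e^{ix/2}` one has `A(x) = w^{-2L} P(w)` for a polynomial `P` of degree at most `4L`, and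
the hypothesis says that `z^{-2L} P(z) ≥ 0` on the unit circle. Being real there, `P` coincides
with its conjugate reflection `z^{4L} conj(P(1/conj z))`, so a root `r` of `P` comes with the
root `1/conj r`; a root on the circle is double, because a nonnegative function vanishing at a
point has zero derivative there. Hence `(X - r)(1 - conj r X)`, which equals `z |z - r|^2` on the
circle, divides `P`, and peeling off these factors one at a time yields `c` of degree at most
`2L` with `P(z) = z^{2L} |c(z)|^2` on the circle; then `Q(x) = w^{-L} c(w)`.
-/

open Polynomial Complex
open scoped ComplexOrder ComplexConjugate Real

theorem countable_preimage_exp_mul_I {S : Set ℂ} (hS : S.Countable) :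
    ((fun t : ℝ => exp (t * I)) ⁻¹' S).Countable := by
  refine (hS.biUnion fun w _ => Set.countable_range fun k : ℤ => arg w + k * (2 * π)).mono ?_
  intro t ht
  refine Set.mem_biUnion ht ⟨toIocDiv Real.two_pi_pos (-π) t, ?_⟩
  simp only [arg_exp_mul_I, toIocMod_add_toIocDiv_mul]

theorem countable_setOf_eval_exp_mul_I_eq_zero {c : ℂ[X]} (hc : c ≠ 0) :
    {t : ℝ | c.eval (exp (t * I)) = 0}.Countable :=
  countable_preimage_exp_mul_I (finite_setOfPred_isRoot hc).countable

theorem eq_of_eval_exp_mul_I_eq {p q : ℂ[X]}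
    (h : ∀ t : ℝ, p.eval (exp (t * I)) = q.eval (exp (t * I))) : p = q := by
  by_contra hpq
  apply Set.not_countable_univ (α := ℝ)
  simpa [sub_eq_zero, h] using countable_setOf_eval_exp_mul_I_eq_zero (sub_ne_zero.mpr hpq)

theorem le_of_le_on_compl_of_countable {α : Type*} [TopologicalSpace α] [Preorder α]
    [OrderClosedTopology α] {f g : ℝ → α} (hf : Continuous f) (hg : Continuous g)
    {S : Set ℝ} (hS : S.Countable) (h : ∀ t ∉ S, f t ≤ g t) (t : ℝ) : f t ≤ g t :=
  le_on_closure (s := Sᶜ) h hf.continuousOn hg.continuousOn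
    (by simp [(hS.dense_compl ℝ).closure_eq])

theorem HasDerivAt.eq_zero_of_nonneg {f : ℝ → ℂ} {f' : ℂ} {s : ℝ} (hf : HasDerivAt f f' s)
    (h : ∀ t, 0 ≤ f t) (hs : f s = 0) : f' = 0 := by
  have hre : HasDerivAt (fun t => (f t).re) f'.re s := reCLM.hasFDerivAt.comp_hasDerivAt s hf
  have him : HasDerivAt (fun t => (f t).im) f'.im s := imCLM.hasFDerivAt.comp_hasDerivAt s hf
  have hmin : IsLocalMin (fun t => (f t).re) s :=
    Filter.Eventually.of_forall fun t => by simpa [hs] using (nonneg_iff.mp (h t)).1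
  have him0 : (fun t => (f t).im) = fun _ => 0 := funext fun t => (nonneg_iff.mp (h t)).2.symm
  rw [him0] at him
  exact Complex.ext (hmin.hasDerivAt_eq_zero hre) (him.unique (hasDerivAt_const s 0))

noncomputable def conjReflect (N : ℕ) (c : ℂ[X]) : ℂ[X] := (c.map (starRingEnd ℂ)).reflect N

theorem coeff_conjReflect {N i : ℕ} (c : ℂ[X]) (hi : i ≤ N) :
    (conjReflect N c).coeff i = conj (c.coeff (N - i)) := by
  rw [conjReflect, coeff_reflect, revAt_le hi, coeff_map]

theorem conjReflect_mul {f g : ℂ[X]} {N M : ℕ} (hf : f.natDegree ≤ N)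
    (hg : g.natDegree ≤ M) :
    conjReflect (N + M) (f * g) = conjReflect N f * conjReflect M g := by
  rw [conjReflect, Polynomial.map_mul,
    reflect_mul _ _ (by rwa [natDegree_map]) (by rwa [natDegree_map])]
  rfl

theorem conjReflect_one_X_sub_C (r : ℂ) : conjReflect 1 (X - C r) = 1 - C (conj r) * X := by
  simp [conjReflect, reflect_sub, reflect_C]

theorem eval_conjReflect {c : ℂ[X]} {N : ℕ} (hc : c.natDegree ≤ N) {z : ℂ}
    (hz : ‖z‖ = 1) :
    (conjReflect N c).eval z = z ^ N * conj (c.eval z) := by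
  have hz0 : z ≠ 0 := norm_ne_zero_iff.mp (by simp [hz])
  have : Invertible z⁻¹ := invertibleOfNonzero (inv_ne_zero hz0)
  have h := eval₂_reflect_mul_pow (RingHom.id ℂ) z⁻¹ N (c.map (starRingEnd ℂ))
    (by rwa [natDegree_map])
  rw [invOf_eq_inv, inv_inv, ← eval, ← eval, eval_map, inv_eq_conj hz, eval₂_hom] at h
  rw [conjReflect, ← h, ← inv_eq_conj hz, mul_comm, mul_assoc, inv_pow,
    inv_mul_cancel₀ (pow_ne_zero _ hz0), mul_one]

theorem eval_mul_conjReflect {c : ℂ[X]} {N : ℕ} (hc : c.natDegree ≤ N) {z : ℂ}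
    (hz : ‖z‖ = 1) :
    (c * conjReflect N c).eval z = z ^ N * normSq (c.eval z) := by
  rw [eval_mul, eval_conjReflect hc hz, mul_left_comm, mul_conj]

/-- `0 ≤` is taken in `ComplexOrder`: `p z / z ^ n` is real and nonnegative for `‖z‖ = 1`. -/
def IsNonnegOnCircle (n : ℕ) (p : ℂ[X]) : Prop :=
  ∀ t : ℝ, 0 ≤ p.eval (exp (t * I)) / exp (t * I) ^ n

theorem continuous_eval_exp_mul_I_div_pow (n : ℕ) (p : ℂ[X]) :
    Continuous fun t : ℝ => p.eval (exp (t * I)) / exp (t * I) ^ n :=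
  (p.continuous.comp (by fun_prop)).div (by fun_prop) fun _ => pow_ne_zero _ (exp_ne_zero _)

namespace IsNonnegOnCircle

variable {n : ℕ} {p : ℂ[X]}

theorem of_mul_conjReflect {k m : ℕ} {c : ℂ[X]}
    (h : IsNonnegOnCircle (k + m) (c * conjReflect k c * p)) (hc0 : c ≠ 0)
    (hc : c.natDegree ≤ k) : IsNonnegOnCircle m p := by
  refine le_of_le_on_compl_of_countable continuous_const (continuous_eval_exp_mul_I_div_pow m p)
    (countable_setOf_eval_exp_mul_I_eq_zero hc0) fun t ht => ?_
  have hz := norm_exp_ofReal_mul_I t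
  set z := exp (t * I)
  have hz0 : z ≠ 0 := exp_ne_zero _
  have hnorm : (normSq (c.eval z) : ℂ) ≠ 0 := ofReal_ne_zero.2 (normSq_pos.2 ht).ne'
  have key : p.eval z / z ^ m =
      ((normSq (c.eval z))⁻¹ : ℝ) * ((c * conjReflect k c * p).eval z / z ^ (k + m)) := by
    rw [eval_mul, eval_mul_conjReflect hc hz, pow_add]
    push_cast
    field_simp
  rw [key]
  exact mul_nonneg (zero_le_real.2 (inv_nonneg.2 (normSq_nonneg _))) (h t)

theorem isRoot_derivative (hp : IsNonnegOnCircle n p) {w : ℂ} (hw : ‖w‖ = 1)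
    (hr : p.IsRoot w) : p.derivative.IsRoot w := by
  obtain ⟨s, rfl⟩ : ∃ s : ℝ, exp (s * I) = w :=
    ⟨arg w, by simpa [hw] using norm_mul_exp_arg_mul_I w⟩
  have hexp : HasDerivAt (fun t : ℝ => exp (t * I)) (exp (s * I) * I) s := by
    simpa using ((hasDerivAt_id s).ofReal_comp.mul_const I).cexp
  have hF := ((p.hasDerivAt _).comp s hexp).div (hexp.pow n) (pow_ne_zero n (exp_ne_zero _))
  have h0 := hF.eq_zero_of_nonneg hp (by simp [hr.eq_zero])
  simpa [hr.eq_zero, exp_ne_zero, I_ne_zero] using h0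

theorem conjReflect_eq (hp : IsNonnegOnCircle n p) (hdeg : p.natDegree ≤ 2 * n) :
    conjReflect (2 * n) p = p := by
  refine eq_of_eval_exp_mul_I_eq fun t => ?_
  have hz := norm_exp_ofReal_mul_I t
  set z := exp (t * I)
  have hz0 : z ≠ 0 := exp_ne_zero _
  have hreal : conj (p.eval z / z ^ n) = p.eval z / z ^ n :=
    conj_eq_iff_im.2 (nonneg_iff.1 (hp t)).2.symm
  rw [map_div₀, map_pow, ← inv_eq_conj hz, inv_pow, div_inv_eq_mul] at hreal
  field_simp at hreal
  rw [eval_conjReflect hdeg hz]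
  linear_combination hreal

theorem dvd_of_isRoot (hp : IsNonnegOnCircle n p) (hdeg : p.natDegree ≤ 2 * n) {r : ℂ}
    (hr : p.IsRoot r) : (X - C r) * conjReflect 1 (X - C r) ∣ p := by
  rcases eq_or_ne p 0 with rfl | hp0
  · exact dvd_zero _
  obtain ⟨p₁, hfac⟩ := dvd_iff_isRoot.2 hr
  have hp₁0 : p₁ ≠ 0 := by rintro rfl; simp [hfac] at hp0
  have hp₁ : 1 + p₁.natDegree ≤ 2 * n := by
    rwa [hfac, natDegree_mul (X_sub_C_ne_zero r) hp₁0, natDegree_X_sub_C] at hdeg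
  have hdvd : conjReflect 1 (X - C r) ∣ p := by
    rw [← hp.conjReflect_eq hdeg, hfac, show 2 * n = 1 + (2 * n - 1) by omega,
      conjReflect_mul (natDegree_X_sub_C_le r) (by omega : p₁.natDegree ≤ 2 * n - 1)]
    exact dvd_mul_right _ _
  rw [conjReflect_one_X_sub_C]
  by_cases hcirc : ‖r‖ = 1
  · -- here `1 - conj r * X` is a multiple of `X - r`, so `r` has to be a double root
    have hrr : conj r * r = 1 := by rw [conj_mul', hcirc]; simp
    have hsq : (X - C r) ^ 2 ∣ p :=
      (le_rootMultiplicity_iff hp0).1 ((one_lt_rootMultiplicity_iff_isRoot hp0).2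
        ⟨hr, hp.isRoot_derivative hcirc hr⟩)
    have hr0 : conj r ≠ 0 := left_ne_zero_of_mul_eq_one hrr
    have : (X - C r) * (1 - C (conj r) * X) = C (-conj r) * (X - C r) ^ 2 := by
      rw [← C_1, ← hrr]; simp only [map_mul, map_neg]; ring
    rwa [this, (isUnit_C.2 (neg_ne_zero.2 hr0).isUnit).mul_left_dvd]
  · have hcop : IsCoprime (X - C r) (1 - C (conj r) * X) := by
      refine (irreducible_X_sub_C r).coprime_iff_not_dvd.2 fun h => hcirc ?_
      have := (dvd_iff_isRoot.1 h).eq_zero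
      rw [eval_sub, eval_one, eval_mul, eval_C, eval_X, conj_mul', sub_eq_zero] at this
      exact (pow_eq_one_iff_of_nonneg (norm_nonneg r) two_ne_zero).1 (by exact_mod_cast this.symm)
    exact hcop.mul_dvd (dvd_iff_isRoot.2 hr) (conjReflect_one_X_sub_C r ▸ hdvd)

theorem exists_eq_mul_conjReflect_X_sub_C_mul (hp : IsNonnegOnCircle (n + 1) p)
    (hdeg : p.natDegree ≤ 2 * (n + 1)) (hp0 : p ≠ 0) :
    ∃ r p₂, p = (X - C r) * conjReflect 1 (X - C r) * p₂ ∧ p₂.natDegree ≤ 2 * n ∧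
      IsNonnegOnCircle n p₂ := by
  have htop : p.coeff (2 * (n + 1)) = conj (p.coeff 0) := by
    conv_lhs => rw [← hp.conjReflect_eq hdeg]
    rw [coeff_conjReflect p le_rfl, Nat.sub_self]
  have hpos : 0 < p.natDegree := by
    refine Nat.pos_of_ne_zero fun h => hp0 ?_
    have h0 : p.coeff (2 * (n + 1)) = 0 := coeff_eq_zero_of_natDegree_lt (by omega)
    rw [eq_C_of_natDegree_eq_zero h, (map_eq_zero (starRingEnd ℂ)).1 (htop ▸ h0 :), C_0]
  obtain ⟨r, hr⟩ := exists_root (natDegree_pos_iff_degree_pos.1 hpos)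
  obtain ⟨p₂, hfac⟩ := hp.dvd_of_isRoot hdeg hr
  have hp₂0 : p₂ ≠ 0 := by rintro rfl; simp [hfac] at hp0
  refine ⟨r, p₂, hfac, ?_, ?_⟩
  · rcases eq_or_ne r 0 with rfl | hr0
    · -- the factor is only `X`, but then the top coefficient `conj (p 0)` vanishes as well
      have htop0 : p.coeff (2 * (n + 1)) = 0 := by
        rw [htop, coeff_zero_eq_eval_zero, hr.eq_zero, map_zero]
      have hlt : p.natDegree ≠ 2 * (n + 1) := fun h =>
        hp0 (leadingCoeff_eq_zero.1 (by rw [leadingCoeff, h, htop0]))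
      have hX : (X - C 0) * conjReflect 1 (X - C (0 : ℂ)) = X := by
        rw [conjReflect_one_X_sub_C]; simp
      rw [hfac, hX, natDegree_X_mul hp₂0] at hdeg hlt
      omega
    · have hq : ((X - C r) * conjReflect 1 (X - C r)).natDegree = 2 := by
        rw [conjReflect_one_X_sub_C]
        compute_degree!
      rw [hfac, natDegree_mul (by rintro h; simp [h] at hq) hp₂0, hq] at hdeg
      omega
  · exact of_mul_conjReflect (by rwa [add_comm, ← hfac]) (X_sub_C_ne_zero r)
      (natDegree_X_sub_C_le r)

theorem exists_eq_mul_conjReflect (hp : IsNonnegOnCircle n p) (hdeg : p.natDegree ≤ 2 * n) :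
    ∃ c : ℂ[X], c.natDegree ≤ n ∧ p = c * conjReflect n c := by
  induction n generalizing p with
  | zero =>
    have hpC := eq_C_of_natDegree_le_zero hdeg
    have ha : 0 ≤ p.coeff 0 := by
      have := hp 0
      rwa [hpC, eval_C, pow_zero, div_one] at this
    refine ⟨C (Real.sqrt (p.coeff 0).re), by simp, ?_⟩
    rw [conjReflect, Polynomial.map_C, reflect_C, pow_zero, mul_one, ← C_mul, conj_ofReal,
      ← ofReal_mul, Real.mul_self_sqrt (nonneg_iff.1 ha).1, ← eq_re_of_ofReal_le ha]
    exact hpC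
  | succ n ih =>
    rcases eq_or_ne p 0 with rfl | hp0
    · exact ⟨0, by simp, by simp⟩
    obtain ⟨r, p₂, rfl, hdeg₂, hp₂⟩ := hp.exists_eq_mul_conjReflect_X_sub_C_mul hdeg hp0
    obtain ⟨c, hc, rfl⟩ := ih hp₂ hdeg₂
    refine ⟨(X - C r) * c, natDegree_mul_le.trans (by rw [natDegree_X_sub_C]; omega), ?_⟩
    rw [add_comm n 1, conjReflect_mul (natDegree_X_sub_C_le r) hc]
    ring

end IsNonnegOnCircle

theorem sum_Icc_mul_zpow (N : ℕ) (f : ℤ → ℂ) {w : ℂ} (hw : w ≠ 0) :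
    ∑ j ∈ Finset.Icc (-(N : ℤ)) N, f j * w ^ j =
      (∑ k ∈ Finset.range (2 * N + 1), f (k - N) * w ^ k) / w ^ N := by
  rw [Finset.sum_div]
  refine Finset.sum_nbij' (fun j => (j + N).toNat) (fun k => (k : ℤ) - N) ?_ ?_ ?_ ?_ ?_
  all_goals intro j hj; simp only [Finset.mem_Icc, Finset.mem_range] at hj ⊢
  any_goals omega
  have hj' : ((j + N).toNat : ℤ) = j + N := by omega
  rw [hj', add_sub_cancel_right, ← zpow_natCast, ← zpow_natCast, hj', zpow_add₀ hw]
  field_simp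

theorem exp_I_mul_intCast_mul_div_two (x : ℝ) (j : ℤ) :
    exp (I * j * x / 2) = exp ((x / 2 : ℝ) * I) ^ j := by
  rw [← exp_int_mul]; push_cast; ring_nf

/-- Fejér–Riesz type root decomposition for non-negative real-valued
Laurent polynomials in `ℂ[e^{ix/2}, e^{-ix/2}]`. -/
theorem stmt_0 (L : ℕ) (a : ℤ → ℂ) (A : ℝ → ℂ)
    (hA : ∀ x : ℝ, A x =
      ∑ j ∈ Finset.Icc (-(2 * L : ℤ)) (2 * L), a j * Complex.exp (Complex.I * j * x / 2))
    (hreal : ∀ x : ℝ, (A x).im = 0)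
    (hnonneg : ∀ x : ℝ, 0 ≤ (A x).re) :
    ∃ q : ℤ → ℂ, ∀ x : ℝ,
      (∑ j ∈ Finset.Icc (-(L : ℤ)) (L : ℤ), q j * Complex.exp (Complex.I * j * x / 2)) *
        (starRingEnd ℂ)
          (∑ j ∈ Finset.Icc (-(L : ℤ)) (L : ℤ), q j * Complex.exp (Complex.I * j * x / 2)) =
      A x := by
  set P : ℂ[X] := ∑ k ∈ Finset.range (2 * (2 * L) + 1), C (a (k - (2 * L : ℕ))) * X ^ k
  have hAP (t : ℝ) : A (2 * t) = P.eval (exp (t * I)) / exp (t * I) ^ (2 * L) := by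
    have := sum_Icc_mul_zpow (2 * L) a (exp_ne_zero (t * I))
    simp only [hA, exp_I_mul_intCast_mul_div_two, eval_finsetSum, eval_mul, eval_C, eval_pow,
      eval_X, P]
    push_cast at this ⊢
    rw [← this]; ring_nf
  have hP : IsNonnegOnCircle (2 * L) P := fun t => by
    rw [← hAP, nonneg_iff]; exact ⟨hnonneg _, (hreal _).symm⟩
  have hdeg : P.natDegree ≤ 2 * (2 * L) := natDegree_sum_le_of_forall_le _ _ fun k hk =>
    (natDegree_C_mul_X_pow_le _ _).trans (Nat.lt_succ_iff.1 (Finset.mem_range.1 hk))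
  obtain ⟨c, hc, hPc⟩ := hP.exists_eq_mul_conjReflect hdeg
  refine ⟨fun j => c.coeff (j + L).toNat, fun x => ?_⟩
  set w := exp ((x / 2 : ℝ) * I)
  have hw : ‖w‖ = 1 := norm_exp_ofReal_mul_I _
  have hQ : ∑ j ∈ Finset.Icc (-(L : ℤ)) L, c.coeff (j + L).toNat * exp (I * j * x / 2) =
      c.eval w / w ^ L := by
    simp only [exp_I_mul_intCast_mul_div_two, sum_Icc_mul_zpow L _ (exp_ne_zero _),
      sub_add_cancel, Int.toNat_natCast, eval_eq_sum_range' (p := c) (n := 2 * L + 1) (by omega), w]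
  rw [hQ, mul_conj, map_div₀, map_pow, normSq_eq_norm_sq w, hw, show x = 2 * (x / 2) by ring,
    hAP, hPc, eval_mul_conjReflect hc hw, mul_div_cancel_left₀ _ (pow_ne_zero _ (exp_ne_zero _))]
  simp
end

section
/- Let L ∈ ℕ and let P ∈ ℂ[e^{ix/2}, e^{−ix/2}] be a Laurent polynomial of degree at most L with parity L mod 2. Then |P(x)| ≤ 1 for all x ∈ ℝ if and only if there exists a Laurent polynomial Q ∈ ℂ[e^{ix/2}, e^{−ix/2}] of degree at most L, with parity L mod 2, such that |P(x)|² + |Q(x)|² = 1 for all x ∈ ℝ. -/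
/-!
Write `P(x) = e^{-iLx/2} A(e^{ix})` with `A` a polynomial of degree `≤ L`; the parity condition
makes the exponents `j = 2m - L`. On the unit circle `1 - |A(z)|² = z^{-L} d(z)` for the polynomial
`d = X^L - A A^*`, where `A^*` is the conjugate reflection of `A`, so what is needed is a
Fejér–Riesz factorisation `d(z) = |B(z)|² z^L` of a polynomial that is nonnegative against `z^{-L}`
on the circle.

Fejér–Riesz goes by induction on the degree. Such a `d` equals its own conjugate reflection, so its
nonzero roots come in pairs `r`, `1/r̄`, and a root on the circle is a minimum of a nonnegative
function, hence double. For `|z| = 1`, `(z - r)(z - 1/r̄) = -z |z - r|² / r̄`, so dividing out the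
pair keeps the nonnegativity (at `z = r` by continuity), and the factor `z - r` goes into `B`.
-/

open Polynomial Complex ComplexConjugate
open scoped ComplexOrder

lemma Complex.ne_zero_of_norm_eq_one {z : ℂ} (hz : ‖z‖ = 1) : z ≠ 0 :=
  norm_ne_zero_iff.mp (hz ▸ one_ne_zero)

lemma Complex.mul_conj_of_norm_eq_one {z : ℂ} (hz : ‖z‖ = 1) : z * conj z = 1 := by
  rw [mul_conj', hz, ofReal_one, one_pow]

lemma Complex.exp_arg_mul_I_of_norm_eq_one {z : ℂ} (hz : ‖z‖ = 1) : exp (z.arg * I) = z := by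
  simpa [hz] using norm_mul_exp_arg_mul_I z

lemma Complex.sub_mul_sub_inv_conj {z r : ℂ} (hz : ‖z‖ = 1) (hr : r ≠ 0) :
    (z - r) * (z - (conj r)⁻¹) = z * ‖z - r‖ ^ 2 * -(conj r)⁻¹ := by
  have hz0 : z ≠ 0 := ne_zero_of_norm_eq_one hz
  have hr' : conj r ≠ 0 := by simpa using hr
  rw [← mul_conj', map_sub, ← inv_eq_conj hz]
  field_simp
  ring

lemma Complex.infinite_sphere : (Metric.sphere (0 : ℂ) 1).Infinite := by
  have := (Set.Ioc_infinite (by linarith [Real.pi_pos] : -Real.pi < Real.pi)).to_subtype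
  have : Infinite Circle := Infinite.of_injective _ Circle.argEquiv.symm.injective
  exact (@Set.infinite_range_of_injective Circle ℂ this _ Circle.coe_injective).mono
    (by rintro _ ⟨w, rfl⟩; exact w.2)

lemma Complex.countable_setOf_exp_mul_I_eq (r : ℂ) : {x : ℝ | exp (x * I) = r}.Countable := by
  rcases Set.eq_empty_or_nonempty {x : ℝ | exp (x * I) = r} with h | ⟨x₀, hx₀⟩
  · simp [h]
  refine (Set.countable_range fun m : ℤ => x₀ + m * (2 * Real.pi)).mono fun x hx => ?_
  obtain ⟨m, hm⟩ := exp_eq_exp_iff_exists_int.mp (hx.trans hx₀.symm)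
  refine ⟨m, ?_⟩
  apply ofReal_injective
  apply mul_right_cancel₀ I_ne_zero
  push_cast
  rw [hm]
  ring

lemma Complex.nonneg_on_sphere_of_ne {f : ℂ → ℂ} (hf : Continuous f) {r : ℂ}
    (h : ∀ z : ℂ, ‖z‖ = 1 → z ≠ r → 0 ≤ f z) {z : ℂ} (hz : ‖z‖ = 1) : 0 ≤ f z := by
  have hdense : Dense {x : ℝ | exp (x * I) = r}ᶜ := (countable_setOf_exp_mul_I_eq r).dense_compl ℝ
  have hclosed : IsClosed {x : ℝ | 0 ≤ f (exp (x * I))} :=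
    isClosed_le continuous_const (hf.comp (by fun_prop))
  have hall : ∀ x : ℝ, 0 ≤ f (exp (x * I)) := fun x =>
    hclosed.closure_subset_iff.mpr (fun y hy => h _ (norm_exp_ofReal_mul_I y) hy)
      (hdense.closure_eq ▸ Set.mem_univ x)
  exact exp_arg_mul_I_of_norm_eq_one hz ▸ hall z.arg

lemma eq_zero_of_hasDerivAt_of_nonneg {f : ℝ → ℂ} {f' : ℂ} {x₀ : ℝ} (hf : HasDerivAt f f' x₀)
    (hpos : ∀ x, 0 ≤ f x) (hx₀ : f x₀ = 0) : f' = 0 := by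
  have hre : f'.re = 0 := by
    refine IsLocalMin.hasDerivAt_eq_zero (f := fun x => (f x).re) (Filter.Eventually.of_forall
      fun x => ?_) (reCLM.hasFDerivAt.comp_hasDerivAt x₀ hf)
    simpa [hx₀] using (nonneg_iff.mp (hpos x)).1
  have him : f'.im = 0 := by
    have hconst : imCLM ∘ f = fun _ => 0 := funext fun x => (nonneg_iff.mp (hpos x)).2.symm
    have := imCLM.hasFDerivAt.comp_hasDerivAt x₀ hf
    rw [hconst] at this
    exact this.unique (hasDerivAt_const x₀ 0)
  exact Complex.ext hre him

lemma Polynomial.eval_map_conj (f : ℂ[X]) (z : ℂ) :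
    (f.map (starRingEnd ℂ)).eval z = conj (f.eval (conj z)) := by
  rw [eval_map, ← eval₂_hom, conj_conj]

lemma Polynomial.eval_reflect_map_conj {N : ℕ} {f : ℂ[X]} (hf : f.natDegree ≤ N) {z : ℂ}
    (hz : z ≠ 0) :
    (reflect N (f.map (starRingEnd ℂ))).eval z = z ^ N * conj (f.eval (conj z)⁻¹) := by
  let := invertibleOfNonzero (inv_ne_zero hz)
  have h := eval₂_reflect_mul_pow (starRingEnd ℂ) z⁻¹ N f hf
  rw [invOf_eq_inv, inv_inv, ← eval_map, ← eval_map, ← reflect_map, eval_map_conj, map_inv₀] at h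
  rw [← h, inv_pow, mul_comm, inv_mul_cancel_right₀ (pow_ne_zero N hz)]

lemma Polynomial.eval_reflect_map_conj_of_norm_eq_one {N : ℕ} {f : ℂ[X]} (hf : f.natDegree ≤ N)
    {z : ℂ} (hz : ‖z‖ = 1) :
    (reflect N (f.map (starRingEnd ℂ))).eval z = z ^ N * conj (f.eval z) := by
  rw [eval_reflect_map_conj hf (ne_zero_of_norm_eq_one hz), ← inv_eq_conj hz, inv_inv]

lemma Polynomial.eq_of_eval_eq_on_circle {f g : ℂ[X]}
    (h : ∀ z : ℂ, ‖z‖ = 1 → f.eval z = g.eval z) : f = g :=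
  eq_of_infinite_eval_eq f g (infinite_sphere.mono fun z hz => h z (by simpa using hz))

/-- `z̄ⁿ d(z) = z⁻ⁿ d(z)` is real and nonnegative on the unit circle (`ComplexOrder`). -/
def NonnegOnCircle (n : ℕ) (d : ℂ[X]) : Prop :=
  ∀ z : ℂ, ‖z‖ = 1 → 0 ≤ d.eval z * conj z ^ n

namespace NonnegOnCircle

variable {n : ℕ} {d : ℂ[X]}

lemma reflect_map_conj_eq (hd : NonnegOnCircle n d) (hdeg : d.natDegree ≤ 2 * n) :
    reflect (2 * n) (d.map (starRingEnd ℂ)) = d := by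
  refine eq_of_eval_eq_on_circle fun z hz => ?_
  have hz0 : z ≠ 0 := ne_zero_of_norm_eq_one hz
  have hreal := (IsSelfAdjoint.of_nonneg (hd z hz)).star_eq
  rw [eval_reflect_map_conj_of_norm_eq_one hdeg hz]
  rw [star_def, map_mul, map_pow, conj_conj, ← inv_eq_conj hz] at hreal
  calc z ^ (2 * n) * conj (d.eval z) = z ^ n * (conj (d.eval z) * z ^ n) := by ring
    _ = z ^ n * (d.eval z * z⁻¹ ^ n) := by rw [hreal]
    _ = d.eval z := by rw [inv_pow]; field_simp

lemma coeff_two_mul (hd : NonnegOnCircle n d) (hdeg : d.natDegree ≤ 2 * n) :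
    d.coeff (2 * n) = conj (d.coeff 0) := by
  conv_lhs => rw [← hd.reflect_map_conj_eq hdeg]
  rw [coeff_reflect, revAt_le le_rfl, Nat.sub_self, coeff_map]

lemma isRoot_inv_conj (hd : NonnegOnCircle n d) (hdeg : d.natDegree ≤ 2 * n) {r : ℂ}
    (hr : d.IsRoot r) (hr0 : r ≠ 0) : d.IsRoot (conj r)⁻¹ := by
  have hs0 : (conj r)⁻¹ ≠ 0 := by simpa using hr0
  rw [IsRoot, ← hd.reflect_map_conj_eq hdeg, eval_reflect_map_conj hdeg hs0]
  simp [hr.eq_zero]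

lemma isRoot_derivative (hd : NonnegOnCircle n d) {r : ℂ} (hr1 : ‖r‖ = 1) (hr : d.IsRoot r) :
    d.derivative.IsRoot r := by
  have hr0 : r ≠ 0 := ne_zero_of_norm_eq_one hr1
  have hr_exp := exp_arg_mul_I_of_norm_eq_one hr1
  have he : ∀ x : ℝ, HasDerivAt (fun x : ℝ => exp (x * I)) (exp (x * I) * I) x := fun x => by
    simpa using ((hasDerivAt_id x).ofReal_comp.mul_const I).cexp
  have hf := ((d.hasDerivAt _).comp r.arg (he r.arg)).mul (((he r.arg).star).pow n)
  have := eq_zero_of_hasDerivAt_of_nonneg hf (fun x => hd _ (norm_exp_ofReal_mul_I x))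
    (by simp [hr_exp, hr.eq_zero])
  simpa [hr_exp, hr.eq_zero, hr0] using this

lemma X_sub_C_mul_X_sub_C_dvd (hd : NonnegOnCircle n d) (hdeg : d.natDegree ≤ 2 * n)
    (hd0 : d ≠ 0) {r : ℂ} (hr : d.IsRoot r) (hr0 : r ≠ 0) :
    (X - C r) * (X - C (conj r)⁻¹) ∣ d := by
  by_cases hrs : r = (conj r)⁻¹
  · have hr1 : ‖r‖ = 1 := by
      have h : (‖r‖ : ℂ) ^ 2 = 1 := by
        rw [← mul_conj']
        nth_rewrite 1 [hrs]
        exact inv_mul_cancel₀ (by simpa using hr0)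
      exact (pow_eq_one_iff_of_nonneg (norm_nonneg r) two_ne_zero).mp (by exact_mod_cast h)
    rw [← hrs, ← sq, ← le_rootMultiplicity_iff hd0]
    exact (one_lt_rootMultiplicity_iff_isRoot hd0).mpr ⟨hr, hd.isRoot_derivative hr1 hr⟩
  · exact (isCoprime_X_sub_C_of_isUnit_sub (sub_ne_zero.mpr hrs).isUnit).mul_dvd
      (dvd_iff_isRoot.mpr hr) (dvd_iff_isRoot.mpr (hd.isRoot_inv_conj hdeg hr hr0))

lemma of_X_mul (hd : NonnegOnCircle (n + 1) (X * d)) : NonnegOnCircle n d := fun z hz => by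
  convert hd z hz using 1
  rw [eval_mul, eval_X, pow_succ]
  linear_combination (-(d.eval z * conj z ^ n)) * mul_conj_of_norm_eq_one hz

lemma natDegree_le_of_X_mul (hd : NonnegOnCircle (n + 1) (X * d))
    (hdeg : (X * d).natDegree ≤ 2 * (n + 1)) : d.natDegree ≤ 2 * n := by
  refine natDegree_le_iff_coeff_eq_zero.mpr fun i hi => ?_
  rw [← coeff_X_mul]
  rcases (by omega : i + 1 = 2 * (n + 1) ∨ 2 * (n + 1) < i + 1) with hi | hi
  · rw [hi, hd.coeff_two_mul hdeg, mul_coeff_zero, coeff_X_zero, zero_mul, map_zero]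
  · exact coeff_eq_zero_of_natDegree_lt (hdeg.trans_lt hi)

lemma of_X_sub_C_mul {r : ℂ} (hr0 : r ≠ 0)
    (hd : NonnegOnCircle (n + 1) ((X - C r) * (X - C (conj r)⁻¹) * d)) :
    NonnegOnCircle n (C (-(conj r)⁻¹) * d) := by
  refine fun z hz => nonneg_on_sphere_of_ne (r := r)
    ((C (-(conj r)⁻¹) * d).continuous.mul (continuous_conj.pow n)) (fun w hw hwr => ?_) hz
  show 0 ≤ (C (-(conj r)⁻¹) * d).eval w * conj w ^ n
  have hw0 : ‖w - r‖ ≠ 0 := norm_ne_zero_iff.mpr (sub_ne_zero.mpr hwr)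
  have key : ((X - C r) * (X - C (conj r)⁻¹) * d).eval w * conj w ^ (n + 1)
      = ‖w - r‖ ^ 2 * ((C (-(conj r)⁻¹) * d).eval w * conj w ^ n) := by
    simp only [eval_mul, eval_sub, eval_X, eval_C, sub_mul_sub_inv_conj hw hr0, pow_succ]
    linear_combination (‖w - r‖ ^ 2 * -(conj r)⁻¹ * d.eval w * conj w ^ n) *
      mul_conj_of_norm_eq_one hw
  have hquot : (C (-(conj r)⁻¹) * d).eval w * conj w ^ n = ((‖w - r‖ ^ 2)⁻¹ : ℝ) *
      (((X - C r) * (X - C (conj r)⁻¹) * d).eval w * conj w ^ (n + 1)) := by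
    rw [key]
    push_cast
    field_simp
  rw [hquot]
  exact mul_nonneg (zero_le_real.mpr (by positivity)) (hd w hw)

end NonnegOnCircle

theorem fejer_riesz {n : ℕ} {d : ℂ[X]} (hdeg : d.natDegree ≤ 2 * n) (hd : NonnegOnCircle n d) :
    ∃ e : ℂ[X], e.natDegree ≤ n ∧ ∀ z : ℂ, ‖z‖ = 1 → d.eval z = ‖e.eval z‖ ^ 2 * z ^ n := by
  induction n generalizing d with
  | zero =>
    obtain ⟨c, rfl⟩ : ∃ c, d = C c := ⟨_, eq_C_of_natDegree_le_zero hdeg⟩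
    have hc : 0 ≤ c := by simpa using hd 1 (by simp)
    refine ⟨C (√c.re : ℂ), by simp, fun z _ => ?_⟩
    simp only [eval_C, norm_real, Real.norm_eq_abs, pow_zero, mul_one]
    norm_cast
    rw [sq_abs, Real.sq_sqrt (nonneg_iff.mp hc).1, ← eq_re_of_ofReal_le hc]
  | succ n ih =>
    by_cases h0 : d.coeff 0 = 0
    · obtain ⟨d₁, rfl⟩ := X_dvd_iff.mpr h0
      obtain ⟨e, he, hde⟩ := ih (hd.natDegree_le_of_X_mul hdeg) hd.of_X_mul
      exact ⟨e, he.trans n.le_succ, fun z hz => by rw [eval_mul, eval_X, hde z hz]; ring⟩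
    · have hd0 : d ≠ 0 := fun h => h0 (by simp [h])
      have htop : 2 * (n + 1) ≤ d.natDegree :=
        le_natDegree_of_ne_zero (by simpa [hd.coeff_two_mul hdeg] using h0)
      obtain ⟨r, hr⟩ :=
        exists_root (natDegree_pos_iff_degree_pos.mp (show 0 < d.natDegree by omega))
      have hr0 : r ≠ 0 := by
        rintro rfl
        exact h0 (by rwa [coeff_zero_eq_eval_zero])
      obtain ⟨d₂, rfl⟩ := hd.X_sub_C_mul_X_sub_C_dvd hdeg hd0 hr hr0
      have hd₂ : d₂ ≠ 0 := right_ne_zero_of_mul hd0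
      have hdeg₂ : (C (-(conj r)⁻¹) * d₂).natDegree ≤ 2 * n := by
        refine (natDegree_C_mul_le _ _).trans ?_
        rw [natDegree_mul (mul_ne_zero (X_sub_C_ne_zero _) (X_sub_C_ne_zero _)) hd₂,
          natDegree_mul (X_sub_C_ne_zero _) (X_sub_C_ne_zero _), natDegree_X_sub_C,
          natDegree_X_sub_C] at hdeg
        omega
      obtain ⟨e, he, hde⟩ := ih hdeg₂ (hd.of_X_sub_C_mul hr0)
      refine ⟨(X - C r) * e, ?_, fun z hz => ?_⟩
      · exact natDegree_mul_le.trans (by rw [natDegree_X_sub_C]; omega)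
      · have h := hde z hz
        simp only [eval_mul, eval_C] at h
        simp only [eval_mul, eval_sub, eval_X, eval_C, sub_mul_sub_inv_conj hz hr0, norm_mul]
        push_cast
        linear_combination (z * ‖z - r‖ ^ 2) * h

theorem exists_sq_norm_add_sq_norm_eq_one {L : ℕ} {A : ℂ[X]} (hA : A.natDegree ≤ L)
    (h : ∀ z : ℂ, ‖z‖ = 1 → ‖A.eval z‖ ≤ 1) :
    ∃ B : ℂ[X], B.natDegree ≤ L ∧ ∀ z : ℂ, ‖z‖ = 1 → ‖A.eval z‖ ^ 2 + ‖B.eval z‖ ^ 2 = 1 := by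
  set d := X ^ L - A * reflect L (A.map (starRingEnd ℂ))
  have hd_eval : ∀ z : ℂ, ‖z‖ = 1 → d.eval z = ((1 - ‖A.eval z‖ ^ 2 : ℝ) : ℂ) * z ^ L := by
    intro z hz
    simp only [d, eval_sub, eval_pow, eval_X, eval_mul,
      eval_reflect_map_conj_of_norm_eq_one hA hz]
    push_cast
    rw [← mul_conj']
    ring
  have hdeg : d.natDegree ≤ 2 * L := by
    have : (reflect L (A.map (starRingEnd ℂ))).natDegree ≤ L :=
      natDegree_reflect_le.trans (max_le le_rfl (natDegree_map_le.trans hA))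
    refine (natDegree_sub_le _ _).trans (max_le ?_ (natDegree_mul_le.trans ?_))
    · rw [natDegree_X_pow]
      omega
    · omega
  have hd : NonnegOnCircle L d := fun z hz => by
    rw [hd_eval z hz, mul_assoc, ← mul_pow, mul_conj_of_norm_eq_one hz, one_pow, mul_one]
    exact zero_le_real.mpr (by nlinarith [h z hz, norm_nonneg (A.eval z)])
  obtain ⟨B, hB, hdB⟩ := fejer_riesz hdeg hd
  refine ⟨B, hB, fun z hz => ?_⟩
  have hz0 : z ^ L ≠ 0 := pow_ne_zero L (ne_zero_of_norm_eq_one hz)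
  have h1 := mul_right_cancel₀ hz0 ((hd_eval z hz).symm.trans (hdB z hz))
  norm_cast at h1
  linarith

noncomputable def laurentToPoly (L : ℕ) (p : ℤ → ℂ) : ℂ[X] :=
  ∑ m ∈ Finset.range (L + 1), C (p (2 * m - L)) * X ^ m

/-- Meaningful only for `-L ≤ j ≤ L`: below that, `Int.toNat` truncates the index to `0`. -/
def polyToLaurent (L : ℕ) (B : ℂ[X]) (j : ℤ) : ℂ :=
  if j % 2 = L % 2 then B.coeff ((j + L) / 2).toNat else 0

lemma polyToLaurent_eq_zero {L : ℕ} (B : ℂ[X]) {j : ℤ} (hj : j % 2 ≠ (L : ℤ) % 2) :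
    polyToLaurent L B j = 0 :=
  if_neg hj

lemma natDegree_laurentToPoly_le (L : ℕ) (p : ℤ → ℂ) : (laurentToPoly L p).natDegree ≤ L :=
  natDegree_sum_le_of_forall_le _ _ fun _ hm =>
    (natDegree_C_mul_X_pow_le _ _).trans (Nat.lt_succ_iff.mp (Finset.mem_range.mp hm))

lemma laurentToPoly_polyToLaurent {L : ℕ} {B : ℂ[X]} (hB : B.natDegree ≤ L) :
    laurentToPoly L (polyToLaurent L B) = B := by
  conv_rhs => rw [as_sum_range_C_mul_X_pow' B (Nat.lt_succ_of_le hB)]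
  refine Finset.sum_congr rfl fun m _ => ?_
  rw [polyToLaurent, if_pos (by omega), show ((2 * m - L + L) / 2 : ℤ).toNat = m by omega]

lemma sum_laurent_eq {L : ℕ} {p : ℤ → ℂ} (hp : ∀ j : ℤ, j % 2 ≠ (L : ℤ) % 2 → p j = 0) (x : ℝ) :
    ∑ j ∈ Finset.Icc (-(L : ℤ)) L, p j * exp (I * j * x / 2)
      = exp (-(I * L * x / 2)) * (laurentToPoly L p).eval (exp (x * I)) := by
  have himage : (Finset.range (L + 1)).image (fun m : ℕ => 2 * (m : ℤ) - L)
      ⊆ Finset.Icc (-(L : ℤ)) L := by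
    intro j hj
    simp only [Finset.mem_image, Finset.mem_range] at hj
    obtain ⟨m, hm, rfl⟩ := hj
    simp only [Finset.mem_Icc]
    omega
  rw [← Finset.sum_subset himage fun j hj hj' => ?_, Finset.sum_image fun m _ m' _ h => by
    simpa using h]
  · rw [laurentToPoly, eval_finsetSum, Finset.mul_sum]
    refine Finset.sum_congr rfl fun m _ => ?_
    rw [eval_mul, eval_C, eval_pow, eval_X, ← exp_nat_mul, mul_left_comm, ← exp_add]
    push_cast
    ring_nf
  · rw [hp j, zero_mul]
    intro hpar
    simp only [Finset.mem_Icc] at hj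
    simp only [Finset.mem_image, Finset.mem_range, not_exists, not_and] at hj'
    exact hj' ((j + L) / 2).toNat (by omega) (by omega)

lemma norm_sum_laurent_eq {L : ℕ} {p : ℤ → ℂ} (hp : ∀ j : ℤ, j % 2 ≠ (L : ℤ) % 2 → p j = 0)
    (x : ℝ) :
    ‖∑ j ∈ Finset.Icc (-(L : ℤ)) L, p j * exp (I * j * x / 2)‖
      = ‖(laurentToPoly L p).eval (exp (x * I))‖ := by
  rw [sum_laurent_eq hp, norm_mul, norm_exp]
  simp

/-- Existence of Laurent complementary. A Laurent polynomial
`P(x) = Σ_{j=-L}^{L} p_j e^{ijx/2}` with parity `L mod 2` satisfies `|P(x)| ≤ 1` for all real `x`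
iff there is a Laurent polynomial `Q` of degree at most `L` with parity `L mod 2` such that
`|P(x)|² + |Q(x)|² = 1` for all real `x`. -/
theorem stmt_1 (L : ℕ) (p : ℤ → ℂ)
    (hparity : ∀ j : ℤ, j % 2 ≠ (L : ℤ) % 2 → p j = 0)
    (P : ℝ → ℂ)
    (hP : ∀ x : ℝ, P x =
      ∑ j ∈ Finset.Icc (-(L : ℤ)) (L : ℤ), p j * Complex.exp (Complex.I * j * x / 2)) :
    (∀ x : ℝ, ‖P x‖ ≤ 1) ↔
      ∃ q : ℤ → ℂ,
        (∀ j : ℤ, j % 2 ≠ (L : ℤ) % 2 → q j = 0) ∧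
        (∀ x : ℝ, ‖P x‖ ^ 2 +
          ‖∑ j ∈ Finset.Icc (-(L : ℤ)) (L : ℤ), q j * Complex.exp (Complex.I * j * x / 2)‖ ^ 2
            = 1) := by
  have hPA : ∀ x : ℝ, ‖P x‖ = ‖(laurentToPoly L p).eval (exp (x * I))‖ := fun x => by
    rw [hP x, norm_sum_laurent_eq hparity]
  constructor
  · intro h
    obtain ⟨B, hB, hAB⟩ := exists_sq_norm_add_sq_norm_eq_one (natDegree_laurentToPoly_le L p)
      fun z hz => exp_arg_mul_I_of_norm_eq_one hz ▸ hPA z.arg ▸ h z.arg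
    refine ⟨polyToLaurent L B, fun _ => polyToLaurent_eq_zero B, fun x => ?_⟩
    rw [norm_sum_laurent_eq fun _ => polyToLaurent_eq_zero B, laurentToPoly_polyToLaurent hB, hPA x]
    exact hAB _ (norm_exp_ofReal_mul_I x)
  · rintro ⟨q, -, hq⟩ x
    nlinarith [hq x, norm_nonneg (P x)]
end

section
/- Let L ∈ ℕ and let P, Q : ℝ → ℂ be Laurent polynomials in ℂ[e^{ix/2}, e^{−ix/2}]. There exist ω ∈ ℝ and θ = (θ_0,…,θ_L), φ = (φ_0,…,φ_L) ∈ ℝ^{L+1} such that for all x ∈ ℝ the trigonometric QSP unitary satisfies W^L_{ω,θ,φ}(x) = [[P(x), −Q(x)], [Q*(x), P*(x)]] if and only if the following three conditions hold: (1) deg(P) ≤ L and deg(Q) ≤ L; (2) P and Q have parity L mod 2; (3) |P(x)|² + |Q(x)|² = 1 for all x ∈ ℝ. -/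
/-!
The matrices `[[P, -Q], [Q*, P*]]` are closed under products, and each layer
`Rz x * Ry θ * Rz φ` is one of them with `P, Q` multiples of `e^{∓ix/2}`. Hence, by induction,
`W^L` has this form with `P, Q` of degree `≤ L` and parity `L`; these coefficients are the given
ones because Laurent polynomials are determined by their values (Fourier coefficients over
`[0, 4π]`), and `|P|² + |Q|² = det W = 1`.

Conversely, the coefficient of `e^{iLx}` in `|P|² + |Q|² = 1` is
`p_L p̄_{-L} + q_L q̄_{-L} = 0` for `L ≥ 1`. This makes a 2×2 linear system singular, and its kernel
provides angles `θ_L, φ_L` such that multiplying by the inverse of the last layer kills the top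
coefficient of `P` and the bottom one of `Q`, lowering the degree to `L - 1`; since the last layer
has determinant one, `|P|² + |Q|² = 1` is preserved and induction applies.
-/

open scoped Matrix

/-- `R_z(φ) = diag(e^{-iφ/2}, e^{iφ/2})`. -/
noncomputable def Rz (φ : ℝ) : Matrix (Fin 2) (Fin 2) ℂ :=
  !![Complex.exp (-(Complex.I * φ / 2)), 0; 0, Complex.exp (Complex.I * φ / 2)]

/-- `R_y(θ)`, the real rotation by angle `θ/2`, viewed as a complex matrix. -/
noncomputable def Ry (θ : ℝ) : Matrix (Fin 2) (Fin 2) ℂ :=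
  !![(Real.cos (θ / 2) : ℂ), -(Real.sin (θ / 2) : ℂ);
     (Real.sin (θ / 2) : ℂ), (Real.cos (θ / 2) : ℂ)]

/-- The trigonometric QSP unitary
`W^L_{ω,θ,φ}(x) = R_z(ω) R_y(θ_0) R_z(φ_0) ∏_{l=1}^{L} [R_z(x) R_y(θ_l) R_z(φ_l)]`,
multiplied left to right in increasing `l`. -/
noncomputable def Wqsp (L : ℕ) (ω : ℝ) (θ φ : ℕ → ℝ) (x : ℝ) :
    Matrix (Fin 2) (Fin 2) ℂ :=
  Rz ω * Ry (θ 0) * Rz (φ 0) *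
    ((List.range L).map (fun l => Rz x * Ry (θ (l + 1)) * Rz (φ (l + 1)))).prod

/-- The value at `x ∈ ℝ` of the Laurent polynomial in `ℂ[e^{ix/2}, e^{-ix/2}]` with
(finitely supported) coefficients `p : ℤ → ℂ`. -/
noncomputable def lval (p : ℤ → ℂ) (x : ℝ) : ℂ :=
  ∑ᶠ j : ℤ, p j * Complex.exp (Complex.I * j * x / 2)

open Complex

noncomputable def expHalf (j : ℤ) (x : ℝ) : ℂ := exp (I * j * x / 2)

lemma expHalf_zero (x : ℝ) : expHalf 0 x = 1 := by simp [expHalf]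

lemma expHalf_add (j k : ℤ) (x : ℝ) : expHalf (j + k) x = expHalf j x * expHalf k x := by
  simp only [expHalf, ← exp_add]
  push_cast
  ring_nf

lemma expHalf_one (x : ℝ) : expHalf 1 x = exp (I * x / 2) := by simp [expHalf]

lemma expHalf_neg_one (x : ℝ) : expHalf (-1) x = exp (-(I * x / 2)) := by
  simp only [expHalf]
  push_cast
  ring_nf

lemma starRingEnd_exp_I_mul_div_two (t : ℝ) :
    starRingEnd ℂ (exp (I * t / 2)) = exp (-(I * t / 2)) := by
  simp [← exp_conj, map_div₀, map_ofNat, neg_div]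

lemma starRingEnd_exp_neg_I_mul_div_two (t : ℝ) :
    starRingEnd ℂ (exp (-(I * t / 2))) = exp (I * t / 2) := by
  simp [← exp_conj, map_div₀, map_ofNat, neg_div]

lemma starRingEnd_expHalf (j : ℤ) (x : ℝ) : starRingEnd ℂ (expHalf j x) = expHalf (-j) x := by
  simp only [expHalf, ← exp_conj, map_div₀, map_mul, conj_I, conj_ofReal, map_intCast, map_ofNat]
  push_cast
  ring_nf

@[fun_prop]
lemma continuous_expHalf (j : ℤ) : Continuous (expHalf j) := by
  unfold expHalf
  fun_prop

lemma integral_expHalf (j : ℤ) :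
    ∫ x in (0 : ℝ)..4 * Real.pi, expHalf j x = if j = 0 then (4 * Real.pi : ℂ) else 0 := by
  split_ifs with hj
  · simp [hj, expHalf_zero]
  · have hc : I * j / 2 ≠ 0 := by simp [I_ne_zero, hj]
    have hexp : ∀ x : ℝ, expHalf j x = exp (I * j / 2 * x) := fun x => by
      rw [expHalf]
      ring_nf
    have hper : I * j / 2 * ((4 * Real.pi : ℝ) : ℂ) = j * (2 * Real.pi * I) := by
      push_cast
      ring
    simp only [hexp, integral_exp_mul_complex hc, hper, exp_int_mul_two_pi_mul_I]
    simp

def qspMat (P Q : ℂ) : Matrix (Fin 2) (Fin 2) ℂ :=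
  !![P, -Q; starRingEnd ℂ Q, starRingEnd ℂ P]

lemma qspMat_mul (P Q P' Q' : ℂ) :
    qspMat P Q * qspMat P' Q' =
      qspMat (P * P' - Q * starRingEnd ℂ Q') (P * Q' + Q * starRingEnd ℂ P') := by
  ext i j
  fin_cases i <;> fin_cases j <;> simp [qspMat] <;> ring

lemma qspMat_inj {P Q P' Q' : ℂ} : qspMat P Q = qspMat P' Q' ↔ P = P' ∧ Q = Q' := by
  refine ⟨fun h => ⟨?_, ?_⟩, fun h => by rw [h.1, h.2]⟩
  · simpa [qspMat] using congrFun (congrFun h 0) 0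
  · simpa [qspMat] using congrFun (congrFun h 0) 1

lemma det_qspMat (P Q : ℂ) : (qspMat P Q).det = ((‖P‖ ^ 2 + ‖Q‖ ^ 2 : ℝ) : ℂ) := by
  rw [qspMat, Matrix.det_fin_two_of, ofReal_add, ← normSq_eq_norm_sq, ← normSq_eq_norm_sq,
    ← mul_conj, ← mul_conj]
  ring

lemma Rz_mul_Ry_mul_Rz (x Θ Φ : ℝ) :
    Rz x * Ry Θ * Rz Φ =
      qspMat (exp (-(I * x / 2)) * Real.cos (Θ / 2) * exp (-(I * Φ / 2)))
        (exp (-(I * x / 2)) * Real.sin (Θ / 2) * exp (I * Φ / 2)) := by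
  ext i j
  fin_cases i <;> fin_cases j <;>
    simp [Rz, Ry, qspMat, starRingEnd_exp_I_mul_div_two, starRingEnd_exp_neg_I_mul_div_two,
      -ofReal_cos, -ofReal_sin]

lemma det_Rz (φ : ℝ) : (Rz φ).det = 1 := by
  simp [Rz, Matrix.det_fin_two_of, ← exp_add]

lemma det_Ry (θ : ℝ) : (Ry θ).det = 1 := by
  rw [Ry, Matrix.det_fin_two_of]
  norm_cast
  linear_combination Real.cos_sq_add_sin_sq (θ / 2)

lemma Wqsp_zero (ω : ℝ) (θ φ : ℕ → ℝ) (x : ℝ) :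
    Wqsp 0 ω θ φ x = Rz ω * Ry (θ 0) * Rz (φ 0) := by
  simp [Wqsp]

lemma Wqsp_succ (L : ℕ) (ω : ℝ) (θ φ : ℕ → ℝ) (x : ℝ) :
    Wqsp (L + 1) ω θ φ x = Wqsp L ω θ φ x * (Rz x * Ry (θ (L + 1)) * Rz (φ (L + 1))) := by
  simp [Wqsp, List.range_succ, mul_assoc]

lemma Wqsp_update_succ (L : ℕ) (ω : ℝ) (θ φ : ℕ → ℝ) (Θ Φ x : ℝ) :
    Wqsp L ω (Function.update θ (L + 1) Θ) (Function.update φ (L + 1) Φ) x = Wqsp L ω θ φ x := by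
  have hlt : ∀ l ∈ List.range L, l + 1 ≠ L + 1 := fun l hl => by
    simp only [List.mem_range] at hl
    omega
  simp only [Wqsp, Function.update_of_ne (Nat.succ_ne_zero L).symm]
  congr 2
  exact List.map_congr_left fun l hl => by simp [Function.update_of_ne (hlt l hl)]

lemma det_Wqsp (L : ℕ) (ω : ℝ) (θ φ : ℕ → ℝ) (x : ℝ) : (Wqsp L ω θ φ x).det = 1 := by
  induction L with
  | zero => simp [Wqsp_zero, det_Rz, det_Ry]
  | succ L ih => simp [Wqsp_succ, ih, det_Rz, det_Ry]

section lval

variable {p q : ℤ → ℂ}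

lemma lval_eq_finsum (p : ℤ → ℂ) (x : ℝ) : lval p x = ∑ᶠ j, p j * expHalf j x := rfl

lemma lval_eq_sum {s : Finset ℤ} (hs : Function.support p ⊆ s) (x : ℝ) :
    lval p x = ∑ j ∈ s, p j * expHalf j x :=
  finsum_eq_sum_of_support_subset _ ((Function.support_mul_subset_left _ _).trans hs)

lemma support_subset_Icc {M : ℤ} (hdeg : ∀ j, M < |j| → p j = 0) :
    Function.support p ⊆ ↑(Finset.Icc (-M) M) := fun j hj => by
  rw [Finset.coe_Icc, Set.mem_Icc, ← abs_le]
  by_contra h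
  exact hj (hdeg j (not_le.mp h))

lemma finite_support_of_degree {M : ℤ} (hdeg : ∀ j, M < |j| → p j = 0) :
    (Function.support p).Finite :=
  (Finset.finite_toSet _).subset (support_subset_Icc hdeg)

lemma finite_support_comp_add_right (hp : (Function.support p).Finite) (k : ℤ) :
    (Function.support fun j => p (j + k)).Finite :=
  hp.preimage (add_left_injective k).injOn

lemma continuous_lval (hp : (Function.support p).Finite) : Continuous (lval p) := by
  have h : lval p = fun x => ∑ j ∈ hp.toFinset, p j * expHalf j x :=
    funext (lval_eq_sum (by simp))
  rw [h]
  fun_prop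

lemma lval_add (hp : (Function.support p).Finite) (hq : (Function.support q).Finite) (x : ℝ) :
    lval (fun j => p j + q j) x = lval p x + lval q x := by
  simp only [lval_eq_finsum, add_mul]
  exact finsum_add_distrib (hp.subset (Function.support_mul_subset_left _ _))
    (hq.subset (Function.support_mul_subset_left _ _))

lemma lval_const_mul (c : ℂ) (x : ℝ) : lval (fun j => c * p j) x = c * lval p x := by
  simp only [lval_eq_finsum, mul_finsum, mul_assoc]

lemma lval_comp_add_right (k : ℤ) (x : ℝ) :
    lval (fun j => p (j + k)) x = expHalf (-k) x * lval p x := by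
  have h : ∀ j, p (j + k) * expHalf j x = expHalf (-k) x * (p (j + k) * expHalf (j + k) x) :=
    fun j => by
      rw [show j = j + k + -k by ring, expHalf_add]
      simp only [add_neg_cancel_right]
      ring
  rw [lval_eq_finsum, lval_eq_finsum, finsum_congr h, ← mul_finsum]
  exact congrArg _ (finsum_comp_equiv (Equiv.addRight k) (f := fun i => p i * expHalf i x))

lemma lval_shift_comb (hp : (Function.support p).Finite) (hq : (Function.support q).Finite)
    (a b : ℂ) (k m : ℤ) (x : ℝ) :
    lval (fun j => a * p (j + k) + b * q (j + m)) x =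
      a * expHalf (-k) x * lval p x + b * expHalf (-m) x * lval q x := by
  have hfin : ∀ {r : ℤ → ℂ} (c : ℂ) (n : ℤ), (Function.support r).Finite →
      (Function.support fun j => c * r (j + n)).Finite := fun c n hr =>
    (finite_support_comp_add_right hr n).subset (Function.support_mul_subset_right _ _)
  rw [lval_add (hfin a k hp) (hfin b m hq), lval_const_mul, lval_const_mul, lval_comp_add_right,
    lval_comp_add_right, mul_assoc, mul_assoc]

lemma starRingEnd_lval (hp : (Function.support p).Finite) (x : ℝ) :
    starRingEnd ℂ (lval p x) = lval (fun j => starRingEnd ℂ (p (-j))) x := by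
  rw [lval_eq_finsum, map_finsum _ (hp.subset (Function.support_mul_subset_left _ _)), lval_eq_finsum,
    ← finsum_comp_equiv (Equiv.neg ℤ)]
  simp [starRingEnd_expHalf]

end lval

section Fourier

variable {p q : ℤ → ℂ}

lemma integral_lval (hp : (Function.support p).Finite) :
    ∫ x in (0 : ℝ)..4 * Real.pi, lval p x = 4 * Real.pi * p 0 := by
  have hs : Function.support p ⊆ ↑(insert 0 hp.toFinset) := by simp [Set.subset_insert]
  simp_rw [lval_eq_sum hs]
  rw [intervalIntegral.integral_finsetSum (f := fun j x => p j * expHalf j x) fun j _ =>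
    (continuous_const.mul (continuous_expHalf j)).intervalIntegrable _ _]
  simp only [intervalIntegral.integral_const_mul, integral_expHalf, mul_ite, mul_zero,
    Finset.sum_ite_eq', Finset.mem_insert_self, if_true]
  ring

lemma integral_lval_mul_expHalf (hp : (Function.support p).Finite) (k : ℤ) :
    ∫ x in (0 : ℝ)..4 * Real.pi, lval p x * expHalf (-k) x = 4 * Real.pi * p k := by
  simp_rw [mul_comm (lval p _), ← lval_comp_add_right]
  rw [integral_lval (finite_support_comp_add_right hp k), zero_add]

lemma eq_of_lval_eq (hp : (Function.support p).Finite) (hq : (Function.support q).Finite)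
    (h : ∀ x, lval p x = lval q x) : p = q := by
  funext k
  have h4π : (4 * Real.pi : ℂ) ≠ 0 := by simp [Real.pi_ne_zero]
  apply mul_left_cancel₀ h4π
  rw [← integral_lval_mul_expHalf hp, ← integral_lval_mul_expHalf hq]
  simp_rw [h]

lemma integral_lval_mul_lval_mul_expHalf (hp : (Function.support p).Finite) {s : Finset ℤ}
    (hq : Function.support q ⊆ s) (n : ℤ) :
    ∫ x in (0 : ℝ)..4 * Real.pi, lval p x * lval q x * expHalf (-n) x =
      4 * Real.pi * ∑ k ∈ s, p (n - k) * q k := by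
  have h : ∀ x, lval p x * lval q x * expHalf (-n) x =
      ∑ k ∈ s, q k * (lval p x * expHalf (-(n - k)) x) := fun x => by
    rw [lval_eq_sum hq, Finset.mul_sum, Finset.sum_mul]
    refine Finset.sum_congr rfl fun k _ => ?_
    rw [show -(n - k) = k + -n by ring, expHalf_add]
    ring
  simp_rw [h]
  rw [intervalIntegral.integral_finsetSum (f := fun k x => q k * (lval p x * expHalf (-(n - k)) x))
    fun k _ => (continuous_const.mul
    ((continuous_lval hp).mul (continuous_expHalf _))).intervalIntegrable _ _, Finset.mul_sum]
  refine Finset.sum_congr rfl fun k _ => ?_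
  rw [intervalIntegral.integral_const_mul, integral_lval_mul_expHalf hp]
  ring

lemma integral_lval_mul_conj_mul_expHalf {M : ℤ} (hM : 0 ≤ M) (hdeg : ∀ j, M < |j| → p j = 0) :
    ∫ x in (0 : ℝ)..4 * Real.pi, lval p x * starRingEnd ℂ (lval p x) * expHalf (-(2 * M)) x =
      4 * Real.pi * (p M * starRingEnd ℂ (p (-M))) := by
  have hp := finite_support_of_degree hdeg
  have hconj : Function.support (fun j => starRingEnd ℂ (p (-j))) ⊆ ↑(Finset.Icc (-M) M) :=
    fun j hj => by
      have := support_subset_Icc hdeg (show -j ∈ Function.support p by simpa using hj)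
      simp only [Finset.coe_Icc, Set.mem_Icc] at this ⊢
      omega
  simp_rw [starRingEnd_lval hp]
  rw [integral_lval_mul_lval_mul_expHalf hp hconj, Finset.sum_eq_single M]
  · ring_nf
  · intro k hk hkM
    simp only [Finset.mem_Icc] at hk
    rw [hdeg (2 * M - k) (by rw [abs_of_pos (by omega)]; omega), zero_mul]
  · intro h
    simp at h
    omega

-- The left-hand side is the coefficient of `e^{iMx}` in `|P|² + |Q|²`.
lemma coeff_orthogonal {M : ℤ} (hM : 0 < M) (hdp : ∀ j, M < |j| → p j = 0)
    (hdq : ∀ j, M < |j| → q j = 0) (hnorm : ∀ x : ℝ, ‖lval p x‖ ^ 2 + ‖lval q x‖ ^ 2 = 1) :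
    p M * starRingEnd ℂ (p (-M)) + q M * starRingEnd ℂ (q (-M)) = 0 := by
  have hp := finite_support_of_degree hdp
  have hq := finite_support_of_degree hdq
  have hsum : ∀ x : ℝ, lval p x * starRingEnd ℂ (lval p x) * expHalf (-(2 * M)) x +
      lval q x * starRingEnd ℂ (lval q x) * expHalf (-(2 * M)) x = expHalf (-(2 * M)) x := by
    intro x
    rw [← add_mul, mul_conj, mul_conj, normSq_eq_norm_sq, normSq_eq_norm_sq, ← ofReal_add,
      hnorm x, ofReal_one, one_mul]
  have hint := congrArg (fun f : ℝ → ℂ => ∫ x in (0 : ℝ)..4 * Real.pi, f x) (funext hsum)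
  have hcont : ∀ r : ℤ → ℂ, (Function.support r).Finite → IntervalIntegrable
      (fun x => lval r x * starRingEnd ℂ (lval r x) * expHalf (-(2 * M)) x) MeasureTheory.volume
      0 (4 * Real.pi) := fun r hr =>
    (((continuous_lval hr).mul (continuous_star.comp (continuous_lval hr))).mul
      (continuous_expHalf _)).intervalIntegrable _ _
  rw [intervalIntegral.integral_add (hcont p hp) (hcont q hq),
    integral_lval_mul_conj_mul_expHalf hM.le hdp, integral_lval_mul_conj_mul_expHalf hM.le hdq,
    integral_expHalf, if_neg (by omega), ← mul_add] at hint
  exact (mul_eq_zero.mp hint).resolve_left (by simp [Real.pi_ne_zero])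

end Fourier

def HasDegreeParity (L : ℕ) (p : ℤ → ℂ) : Prop :=
  (∀ j : ℤ, (L : ℤ) < |j| → p j = 0) ∧ ∀ j : ℤ, j % 2 ≠ (L : ℤ) % 2 → p j = 0

namespace HasDegreeParity

variable {L : ℕ} {p q : ℤ → ℂ}

lemma finite_support (hp : HasDegreeParity L p) : (Function.support p).Finite :=
  finite_support_of_degree hp.1

lemma lval_eq (hp : HasDegreeParity 0 p) (x : ℝ) : lval p x = p 0 := by
  have hs : Function.support p ⊆ ↑({0} : Finset ℤ) := by
    simpa using support_subset_Icc hp.1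
  simp [lval_eq_sum hs, expHalf_zero]

lemma single (a : ℂ) : HasDegreeParity 0 (Pi.single 0 a) := by
  refine ⟨fun j hj => ?_, fun j hj => ?_⟩
  · simp_all
  · have hj0 : j ≠ 0 := by
      rintro rfl
      simp at hj
    simp [hj0]

lemma eq_zero_of_ne_of_ne (hp : HasDegreeParity L p) {i : ℤ} (hi : (L : ℤ) - 1 ≤ i ∨ i ≤ 1 - L)
    (hL : i ≠ L) (hL' : i ≠ -L) : p i = 0 := by
  by_cases hdeg : (L : ℤ) < |i|
  · exact hp.1 i hdeg
  · rw [lt_abs] at hdeg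
    exact hp.2 i (by omega)

lemma shift_comb (hp : HasDegreeParity L p) (hq : HasDegreeParity L q) (a b : ℂ) :
    HasDegreeParity (L + 1) fun j => a * p (j + 1) + b * q (j - 1) := by
  refine ⟨fun j hj => ?_, fun j hj => ?_⟩ <;> beta_reduce
  · rw [Nat.cast_succ, lt_abs] at hj
    rw [hp.1 (j + 1) (by rw [lt_abs]; omega), hq.1 (j - 1) (by rw [lt_abs]; omega)]
    ring
  · rw [Nat.cast_succ] at hj
    rw [hp.2 (j + 1) (by omega), hq.2 (j - 1) (by omega)]
    ring

lemma shift_down (hp : HasDegreeParity (L + 1) p) (hq : HasDegreeParity (L + 1) q) (a b : ℂ)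
    (htop : a * p ((L + 1 : ℕ) : ℤ) + b * q ((L + 1 : ℕ) : ℤ) = 0) :
    HasDegreeParity L fun j => a * p (j - 1) + b * q (j - 1) := by
  refine ⟨fun j hj => ?_, fun j hj => ?_⟩ <;> beta_reduce
  · rw [lt_abs] at hj
    rcases eq_or_ne (j - 1) ((L + 1 : ℕ) : ℤ) with hj1 | hj1
    · rwa [hj1]
    rw [hp.eq_zero_of_ne_of_ne (by push_cast; omega) hj1 (by push_cast; omega),
      hq.eq_zero_of_ne_of_ne (by push_cast; omega) hj1 (by push_cast; omega)]
    ring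
  · rw [hp.2 (j - 1) (by push_cast; omega), hq.2 (j - 1) (by push_cast; omega)]
    ring

lemma shift_up (hp : HasDegreeParity (L + 1) p) (hq : HasDegreeParity (L + 1) q) (a b : ℂ)
    (hbot : a * p (-((L + 1 : ℕ) : ℤ)) + b * q (-((L + 1 : ℕ) : ℤ)) = 0) :
    HasDegreeParity L fun j => a * p (j + 1) + b * q (j + 1) := by
  refine ⟨fun j hj => ?_, fun j hj => ?_⟩ <;> beta_reduce
  · rw [lt_abs] at hj
    rcases eq_or_ne (j + 1) (-((L + 1 : ℕ) : ℤ)) with hj1 | hj1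
    · rwa [hj1]
    rw [hp.eq_zero_of_ne_of_ne (by push_cast; omega) (by push_cast; omega) hj1,
      hq.eq_zero_of_ne_of_ne (by push_cast; omega) (by push_cast; omega) hj1]
    ring
  · rw [hp.2 (j + 1) (by push_cast; omega), hq.2 (j + 1) (by push_cast; omega)]
    ring

end HasDegreeParity

-- `(a, b)` is `ρ` times the first row of `Rz ω * Ry Θ * Rz Φ` (see `Rz_mul_Ry_mul_Rz`).
lemma exists_angles (a b : ℂ) :
    ∃ ρ ω Θ Φ : ℝ, 0 ≤ ρ ∧ ρ ^ 2 = ‖a‖ ^ 2 + ‖b‖ ^ 2 ∧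
      a = ρ * (exp (-(I * ω / 2)) * Real.cos (Θ / 2) * exp (-(I * Φ / 2))) ∧
      b = ρ * (exp (-(I * ω / 2)) * Real.sin (Θ / 2) * exp (I * Φ / 2)) := by
  set z : ℂ := ‖a‖ + ‖b‖ * I
  have hre : z.re = ‖a‖ := by simp [z]
  have him : z.im = ‖b‖ := by simp [z]
  have hcos : (‖z‖ * Real.cos (arg z) : ℂ) = ‖a‖ := by
    rcases eq_or_ne z 0 with hz | hz
    · simp [← hre, hz]
    · rw [← ofReal_mul, cos_arg hz, mul_div_cancel₀ _ (norm_ne_zero_iff.mpr hz), hre]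
  have hsin : (‖z‖ * Real.sin (arg z) : ℂ) = ‖b‖ := by
    rcases eq_or_ne z 0 with hz | hz
    · simp [← him, hz]
    · rw [← ofReal_mul, sin_arg, mul_div_cancel₀ _ (norm_ne_zero_iff.mpr hz), him]
  refine ⟨‖z‖, -(arg a + arg b), 2 * arg z, arg b - arg a, norm_nonneg _, ?_, ?_, ?_⟩ <;>
    try rw [mul_div_cancel_left₀ _ two_ne_zero]
  · rw [Complex.sq_norm, normSq_add_mul_I]
  · have hphase : exp (-(I * ↑(-(arg a + arg b)) / 2)) * exp (-(I * ↑(arg b - arg a) / 2)) =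
        exp (arg a * I) := by
      rw [← exp_add]
      push_cast
      ring_nf
    linear_combination (norm_mul_exp_arg_mul_I a).symm - exp (arg a * I) * hcos -
      ‖z‖ * Real.cos (arg z) * hphase
  · have hphase : exp (-(I * ↑(-(arg a + arg b)) / 2)) * exp (I * ↑(arg b - arg a) / 2) =
        exp (arg b * I) := by
      rw [← exp_add]
      push_cast
      ring_nf
    linear_combination (norm_mul_exp_arg_mul_I b).symm - exp (arg b * I) * hsin -
      ‖z‖ * Real.sin (arg z) * hphase

lemma exists_angles_of_orthogonal {u v u' v' : ℂ}
    (h : u * starRingEnd ℂ u' + v * starRingEnd ℂ v' = 0) :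
    ∃ Θ Φ : ℝ,
      Real.cos (Θ / 2) * exp (I * Φ / 2) * u + Real.sin (Θ / 2) * exp (-(I * Φ / 2)) * v = 0 ∧
      -(Real.sin (Θ / 2) * exp (I * Φ / 2)) * u' + Real.cos (Θ / 2) * exp (-(I * Φ / 2)) * v' = 0 := by
  -- The two identities say that the conjugate of the first row of a layer lies in the kernel of
  -- this matrix, whose determinant is minus the conjugate of `h`.
  have hdet : (!![starRingEnd ℂ u, starRingEnd ℂ v; v', -u'] : Matrix (Fin 2) (Fin 2) ℂ).det = 0 := by
    have hconj := congrArg (starRingEnd ℂ) h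
    simp only [map_add, map_mul, conj_conj, map_zero] at hconj
    rw [Matrix.det_fin_two_of]
    linear_combination -hconj
  obtain ⟨w, hw, hker⟩ := Matrix.exists_mulVec_eq_zero_iff.mpr hdet
  obtain ⟨ρ, ω, Θ, Φ, -, -, hw0, hw1⟩ := exists_angles (w 0) (w 1)
  have hr : (ρ : ℂ) * exp (-(I * ω / 2)) ≠ 0 := by
    refine mul_ne_zero (fun hρ => hw ?_) (exp_ne_zero _)
    ext i
    fin_cases i <;> simp [hw0, hw1, hρ]
  have hker0 := congrFun hker 0
  have hker1 := congrFun hker 1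
  simp only [Matrix.mulVec, dotProduct, Fin.sum_univ_two, Matrix.of_apply, Matrix.cons_val',
    Matrix.cons_val_zero, Matrix.cons_val_one, Matrix.empty_val', Matrix.cons_val_fin_one,
    Pi.zero_apply, hw0, hw1] at hker0 hker1
  refine ⟨Θ, Φ, ?_, ?_⟩
  · have hker0' : Real.cos (Θ / 2) * exp (-(I * Φ / 2)) * starRingEnd ℂ u +
        Real.sin (Θ / 2) * exp (I * Φ / 2) * starRingEnd ℂ v = 0 :=
      (mul_eq_zero.mp (by linear_combination hker0)).resolve_left hr
    have hconj := congrArg (starRingEnd ℂ) hker0'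
    simp only [map_add, map_mul, conj_ofReal, conj_conj, map_zero, starRingEnd_exp_I_mul_div_two,
      starRingEnd_exp_neg_I_mul_div_two] at hconj
    exact hconj
  · exact (mul_eq_zero.mp (by linear_combination hker1)).resolve_left hr

section Layers

variable {L : ℕ} {p q : ℤ → ℂ}

lemma exp_mul_exp_neg (z : ℂ) : exp z * exp (-z) = 1 := by
  rw [← exp_add, add_neg_cancel, exp_zero]

lemma exists_coeffs_mul_layer (hp : HasDegreeParity L p) (hq : HasDegreeParity L q) (Θ Φ : ℝ) :
    ∃ p' q', HasDegreeParity (L + 1) p' ∧ HasDegreeParity (L + 1) q' ∧ ∀ x : ℝ,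
      qspMat (lval p x) (lval q x) * (Rz x * Ry Θ * Rz Φ) = qspMat (lval p' x) (lval q' x) := by
  set c : ℂ := ↑(Real.cos (Θ / 2))
  set s : ℂ := ↑(Real.sin (Θ / 2))
  refine ⟨fun j => c * exp (-(I * Φ / 2)) * p (j + 1) + -(s * exp (-(I * Φ / 2))) * q (j - 1),
    fun j => s * exp (I * Φ / 2) * p (j + 1) + c * exp (I * Φ / 2) * q (j - 1),
    hp.shift_comb hq _ _, hp.shift_comb hq _ _, fun x => ?_⟩
  have hP := lval_shift_comb hp.finite_support hq.finite_support
    (c * exp (-(I * Φ / 2))) (-(s * exp (-(I * Φ / 2)))) 1 (-1) x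
  have hQ := lval_shift_comb hp.finite_support hq.finite_support
    (s * exp (I * Φ / 2)) (c * exp (I * Φ / 2)) 1 (-1) x
  simp only [← sub_eq_add_neg, neg_neg, expHalf_one, expHalf_neg_one] at hP hQ
  rw [Rz_mul_Ry_mul_Rz, qspMat_mul, hP, hQ]
  simp only [map_mul, conj_ofReal, starRingEnd_exp_I_mul_div_two,
    starRingEnd_exp_neg_I_mul_div_two]
  congr 1 <;> ring

lemma exists_peel_layer (hp : HasDegreeParity (L + 1) p) (hq : HasDegreeParity (L + 1) q)
    (hnorm : ∀ x : ℝ, ‖lval p x‖ ^ 2 + ‖lval q x‖ ^ 2 = 1) :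
    ∃ (Θ Φ : ℝ) (p' q' : ℤ → ℂ), HasDegreeParity L p' ∧ HasDegreeParity L q' ∧ ∀ x : ℝ,
      qspMat (lval p' x) (lval q' x) * (Rz x * Ry Θ * Rz Φ) = qspMat (lval p x) (lval q x) := by
  obtain ⟨Θ, Φ, htop, hbot⟩ :=
    exists_angles_of_orthogonal (coeff_orthogonal (by positivity) hp.1 hq.1 hnorm)
  have hcs : (Real.cos (Θ / 2) : ℂ) ^ 2 + (Real.sin (Θ / 2) : ℂ) ^ 2 = 1 := by
    exact_mod_cast Real.cos_sq_add_sin_sq (Θ / 2)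
  set c : ℂ := ↑(Real.cos (Θ / 2))
  set s : ℂ := ↑(Real.sin (Θ / 2))
  -- the coefficients of the first row of `qspMat P Q * (Rz x * Ry Θ * Rz Φ)⁻¹`
  refine ⟨Θ, Φ, fun j => c * exp (I * Φ / 2) * p (j - 1) + s * exp (-(I * Φ / 2)) * q (j - 1),
    fun j => -(s * exp (I * Φ / 2)) * p (j + 1) + c * exp (-(I * Φ / 2)) * q (j + 1),
    hp.shift_down hq _ _ htop, hp.shift_up hq _ _ hbot, fun x => ?_⟩
  have hP := lval_shift_comb hp.finite_support hq.finite_support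
    (c * exp (I * Φ / 2)) (s * exp (-(I * Φ / 2))) (-1) (-1) x
  have hQ := lval_shift_comb hp.finite_support hq.finite_support
    (-(s * exp (I * Φ / 2))) (c * exp (-(I * Φ / 2))) 1 1 x
  simp only [← sub_eq_add_neg, neg_neg, expHalf_one, expHalf_neg_one] at hP hQ
  rw [Rz_mul_Ry_mul_Rz, qspMat_mul, hP, hQ]
  simp only [map_mul, conj_ofReal, starRingEnd_exp_I_mul_div_two,
    starRingEnd_exp_neg_I_mul_div_two]
  have hx := exp_mul_exp_neg (I * x / 2)
  have hΦ := exp_mul_exp_neg (I * Φ / 2)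
  congr 1
  · linear_combination (c ^ 2 + s ^ 2) * exp (I * Φ / 2) * exp (-(I * Φ / 2)) * lval p x * hx +
      (c ^ 2 + s ^ 2) * lval p x * hΦ + lval p x * hcs
  · linear_combination (c ^ 2 + s ^ 2) * exp (I * Φ / 2) * exp (-(I * Φ / 2)) * lval q x * hx +
      (c ^ 2 + s ^ 2) * lval q x * hΦ + lval q x * hcs

end Layers

theorem exists_coeffs_Wqsp (L : ℕ) (ω : ℝ) (θ φ : ℕ → ℝ) :
    ∃ p q : ℤ → ℂ, HasDegreeParity L p ∧ HasDegreeParity L q ∧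
      ∀ x : ℝ, Wqsp L ω θ φ x = qspMat (lval p x) (lval q x) := by
  induction L with
  | zero =>
    refine ⟨Pi.single 0 (exp (-(I * ω / 2)) * Real.cos (θ 0 / 2) * exp (-(I * φ 0 / 2))),
      Pi.single 0 (exp (-(I * ω / 2)) * Real.sin (θ 0 / 2) * exp (I * φ 0 / 2)),
      .single _, .single _, fun x => ?_⟩
    rw [Wqsp_zero, Rz_mul_Ry_mul_Rz, (HasDegreeParity.single _).lval_eq,
      (HasDegreeParity.single _).lval_eq, Pi.single_eq_same, Pi.single_eq_same]
  | succ L ih =>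
    obtain ⟨p, q, hp, hq, hW⟩ := ih
    obtain ⟨p', q', hp', hq', hmul⟩ := exists_coeffs_mul_layer hp hq (θ (L + 1)) (φ (L + 1))
    exact ⟨p', q', hp', hq', fun x => by rw [Wqsp_succ, hW, hmul]⟩

theorem exists_Wqsp_of_hasDegreeParity (L : ℕ) {p q : ℤ → ℂ} (hp : HasDegreeParity L p)
    (hq : HasDegreeParity L q) (hnorm : ∀ x : ℝ, ‖lval p x‖ ^ 2 + ‖lval q x‖ ^ 2 = 1) :
    ∃ (ω : ℝ) (θ φ : ℕ → ℝ), ∀ x : ℝ, Wqsp L ω θ φ x = qspMat (lval p x) (lval q x) := by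
  induction L generalizing p q with
  | zero =>
    obtain ⟨ρ, ω, Θ, Φ, hρ, hρ2, hp0, hq0⟩ := exists_angles (p 0) (q 0)
    have hρ1 : ρ = 1 := by
      have h := hnorm 0
      rw [hp.lval_eq, hq.lval_eq, ← hρ2] at h
      exact (pow_left_inj₀ hρ zero_le_one two_ne_zero).mp (by rw [h, one_pow])
    refine ⟨ω, fun _ => Θ, fun _ => Φ, fun x => ?_⟩
    rw [Wqsp_zero, Rz_mul_Ry_mul_Rz, hp.lval_eq, hq.lval_eq, hp0, hq0, hρ1, ofReal_one, one_mul,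
      one_mul]
  | succ L ih =>
    obtain ⟨Θ, Φ, p', q', hp', hq', hmul⟩ := exists_peel_layer hp hq hnorm
    have hnorm' : ∀ x : ℝ, ‖lval p' x‖ ^ 2 + ‖lval q' x‖ ^ 2 = 1 := fun x => by
      have h := congrArg Matrix.det (hmul x)
      rw [Matrix.det_mul, Matrix.det_mul, Matrix.det_mul, det_Rz, det_Ry, det_Rz, det_qspMat,
        det_qspMat, hnorm x] at h
      rw [mul_one, mul_one, mul_one] at h
      exact_mod_cast h
    obtain ⟨ω, θ, φ, hW⟩ := ih hp' hq' hnorm'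
    refine ⟨ω, Function.update θ (L + 1) Θ, Function.update φ (L + 1) Φ, fun x => ?_⟩
    rw [Wqsp_succ, Wqsp_update_succ, Function.update_self, Function.update_self, hW, hmul]

/-- characterization of trigonometric QSP (Lemma 1). -/
theorem stmt_2 (L : ℕ) (p q : ℤ → ℂ)
    (hp : (Function.support p).Finite) (hq : (Function.support q).Finite) :
    (∃ (ω : ℝ) (θ φ : ℕ → ℝ), ∀ x : ℝ,
        Wqsp L ω θ φ x =
          !![lval p x, -(lval q x);
             (starRingEnd ℂ) (lval q x), (starRingEnd ℂ) (lval p x)]) ↔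
      ((∀ j : ℤ, (L : ℤ) < |j| → p j = 0) ∧ (∀ j : ℤ, (L : ℤ) < |j| → q j = 0) ∧
       (∀ j : ℤ, j % 2 ≠ (L : ℤ) % 2 → p j = 0) ∧
       (∀ j : ℤ, j % 2 ≠ (L : ℤ) % 2 → q j = 0) ∧
       (∀ x : ℝ, ‖lval p x‖ ^ 2 + ‖lval q x‖ ^ 2 = 1)) := by
  constructor
  · rintro ⟨ω, θ, φ, hW⟩
    obtain ⟨p', q', hp', hq', hW'⟩ := exists_coeffs_Wqsp L ω θ φ
    have hval : ∀ x, lval p x = lval p' x ∧ lval q x = lval q' x :=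
      fun x => qspMat_inj.mp ((hW x).symm.trans (hW' x))
    obtain rfl := eq_of_lval_eq hp hp'.finite_support fun x => (hval x).1
    obtain rfl := eq_of_lval_eq hq hq'.finite_support fun x => (hval x).2
    refine ⟨hp'.1, hq'.1, hp'.2, hq'.2, fun x => ?_⟩
    have hdet := det_Wqsp L ω θ φ x
    rw [hW', det_qspMat] at hdet
    exact_mod_cast hdet
  · rintro ⟨hdp, hdq, hpp, hqp, hnorm⟩
    exact exists_Wqsp_of_hasDegreeParity L ⟨hdp, hpp⟩ ⟨hdq, hqp⟩ hnorm
end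

section
/- Let U be an N×N unitary matrix and χ ∈ ℂ^N a unit vector with Uχ = e^{iτ}χ for some τ ∈ ℝ. Then there exist ω ∈ ℝ and θ, φ ∈ ℝ² such that the single-layer QPP circuit satisfies tr[(Z ⊗ I_N) · V^1_{ω,θ,φ}(U)(e_0 e_0† ⊗ χχ†) V^1_{ω,θ,φ}(U)†] = cos(τ) = Re⟨χ, Uχ⟩; and there exist (possibly different) ω' ∈ ℝ and θ', φ' ∈ ℝ² such that tr[(Z ⊗ I_N) · V^1_{ω',θ',φ'}(U)(e_0 e_0† ⊗ χχ†) V^1_{ω',θ',φ'}(U)†] = sin(τ) = Im⟨χ, Uχ⟩. -/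
open scoped Matrix

open scoped Kronecker

/-- Block-diagonal matrix `B(X,Y)` with upper-left block `X` and lower-right block `Y`,
as a matrix on `ℂ² ⊗ ℂⁿ`. -/
noncomputable def blockDiag2 {n : Type*} [Fintype n] [DecidableEq n]
    (X Y : Matrix n n ℂ) : Matrix (Fin 2 × n) (Fin 2 × n) ℂ :=
  (!![1, 0; 0, 0] : Matrix (Fin 2) (Fin 2) ℂ) ⊗ₖ X +
    (!![0, 0; 0, 1] : Matrix (Fin 2) (Fin 2) ℂ) ⊗ₖ Y

/-- The QPP circuit for an even number `2·halfL` of layers. -/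
noncomputable def qppEven {n : Type*} [Fintype n] [DecidableEq n]
    (U : Matrix n n ℂ) (halfL : ℕ) (ω : ℝ) (θ φ : ℕ → ℝ) :
    Matrix (Fin 2 × n) (Fin 2 × n) ℂ :=
  ((Rz ω * Ry (θ 0) * Rz (φ 0)) ⊗ₖ (1 : Matrix n n ℂ)) *
    ((List.range halfL).map (fun l =>
      blockDiag2 Uᴴ 1 *
        ((Ry (θ (2 * l + 1)) * Rz (φ (2 * l + 1))) ⊗ₖ (1 : Matrix n n ℂ)) *
        blockDiag2 1 U *
        ((Ry (θ (2 * l + 2)) * Rz (φ (2 * l + 2))) ⊗ₖ (1 : Matrix n n ℂ)))).prod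

/-- The quantum phase processing (QPP) circuit `V^L_{ω,θ,φ}(U)`: for even `L` it is the
interleaved product of ancilla rotations and controlled-`U†`, controlled-`U`; for odd `L`
one extra layer `B(U†, I)·(R_y(θ_L) R_z(φ_L) ⊗ I)` is appended. -/
noncomputable def qpp {n : Type*} [Fintype n] [DecidableEq n]
    (U : Matrix n n ℂ) (L : ℕ) (ω : ℝ) (θ φ : ℕ → ℝ) :
    Matrix (Fin 2 × n) (Fin 2 × n) ℂ :=
  if L % 2 = 0 then qppEven U (L / 2) ω θ φ
  else qppEven U (L / 2) ω θ φ * blockDiag2 Uᴴ 1 *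
    ((Ry (θ L) * Rz (φ L)) ⊗ₖ (1 : Matrix n n ℂ))

/-!
Since `χ` is an eigenvector of `U` with eigenvalue `z = e^{iτ}`, it is an eigenvector of `U†` with
eigenvalue `z̄`, so on `ℂ² ⊗ χχ†` the controlled-`U†` gate acts as the ancilla phase gate
`diag(z̄, 1)` and the whole circuit collapses to a single-qubit one. With
`θ = (-π/2, π/2)`, `φ = (φ₀, 0)` the two `R_y` rotations are Hadamard-like, and the
`Z`-expectation of the ancilla is the interference term `Re(z e^{iφ₀})`; `φ₀ = 0` gives `cos τ`
and `φ₀ = -π/2` gives `sin τ`.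
-/

lemma Matrix.conjTranspose_fin_two_of {α : Type*} [Star α] (a b c d : α) :
    !![a, b; c, d]ᴴ = !![star a, star c; star b, star d] := by
  ext i j; fin_cases i <;> fin_cases j <;> rfl

lemma Matrix.fin_two_diag_eq_smul_add_smul (a b : ℂ) :
    !![a, 0; 0, b] = a • !![1, 0; 0, 0] + b • !![0, 0; 0, 1] := by
  ext i j; fin_cases i <;> fin_cases j <;> simp

section BlockDiagonal

variable {n : Type*} [Fintype n] [DecidableEq n]

lemma blockDiag2_conjTranspose (X Y : Matrix n n ℂ) :
    (blockDiag2 X Y)ᴴ = blockDiag2 Xᴴ Yᴴ := by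
  simp [blockDiag2, Matrix.conjTranspose_kronecker, Matrix.conjTranspose_fin_two_of]

lemma blockDiag2_mul_kronecker {X Y P : Matrix n n ℂ} {a b : ℂ}
    (hX : X * P = a • P) (hY : Y * P = b • P) (F : Matrix (Fin 2) (Fin 2) ℂ) :
    blockDiag2 X Y * (F ⊗ₖ P) = (!![a, 0; 0, b] * F) ⊗ₖ P := by
  rw [blockDiag2, Matrix.add_mul, ← Matrix.mul_kronecker_mul, ← Matrix.mul_kronecker_mul, hX, hY,
    Matrix.fin_two_diag_eq_smul_add_smul a b, Matrix.add_mul, Matrix.add_kronecker,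
    Matrix.kronecker_smul, Matrix.kronecker_smul, Matrix.smul_mul, Matrix.smul_mul,
    Matrix.smul_kronecker, Matrix.smul_kronecker]

lemma kronecker_mul_blockDiag2 {X Y P : Matrix n n ℂ} {a b : ℂ}
    (hX : P * X = a • P) (hY : P * Y = b • P) (F : Matrix (Fin 2) (Fin 2) ℂ) :
    (F ⊗ₖ P) * blockDiag2 X Y = (F * !![a, 0; 0, b]) ⊗ₖ P := by
  rw [blockDiag2, Matrix.mul_add, ← Matrix.mul_kronecker_mul, ← Matrix.mul_kronecker_mul, hX, hY,
    Matrix.fin_two_diag_eq_smul_add_smul a b, Matrix.mul_add, Matrix.add_kronecker,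
    Matrix.kronecker_smul, Matrix.kronecker_smul, Matrix.mul_smul, Matrix.mul_smul,
    Matrix.smul_kronecker, Matrix.smul_kronecker]

lemma blockDiag2_conj_kronecker {X Y P : Matrix n n ℂ} {a b : ℂ} (hP : Pᴴ = P)
    (hX : X * P = a • P) (hY : Y * P = b • P) (F : Matrix (Fin 2) (Fin 2) ℂ) :
    blockDiag2 X Y * (F ⊗ₖ P) * (blockDiag2 X Y)ᴴ =
      (!![a, 0; 0, b] * F * !![a, 0; 0, b]ᴴ) ⊗ₖ P := by
  have adjoint {Z : Matrix n n ℂ} {c : ℂ} (h : Z * P = c • P) : P * Zᴴ = star c • P := by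
    simpa [Matrix.conjTranspose_mul, hP] using congrArg Matrix.conjTranspose h
  rw [blockDiag2_mul_kronecker hX hY, blockDiag2_conjTranspose,
    kronecker_mul_blockDiag2 (adjoint hX) (adjoint hY), Matrix.conjTranspose_fin_two_of]
  simp

lemma kronecker_one_conj_kronecker (A F : Matrix (Fin 2) (Fin 2) ℂ) (P : Matrix n n ℂ) :
    (A ⊗ₖ (1 : Matrix n n ℂ)) * (F ⊗ₖ P) * (A ⊗ₖ (1 : Matrix n n ℂ))ᴴ = (A * F * Aᴴ) ⊗ₖ P := by
  rw [Matrix.conjTranspose_kronecker, Matrix.conjTranspose_one, ← Matrix.mul_kronecker_mul,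
    ← Matrix.mul_kronecker_mul, one_mul, mul_one]

lemma trace_kronecker_one_mul_kronecker (A F : Matrix (Fin 2) (Fin 2) ℂ) (P : Matrix n n ℂ) :
    Matrix.trace ((A ⊗ₖ (1 : Matrix n n ℂ)) * (F ⊗ₖ P)) =
      Matrix.trace (A * F) * Matrix.trace P := by
  rw [← Matrix.mul_kronecker_mul, one_mul, Matrix.trace_kronecker]

lemma qpp_one (U : Matrix n n ℂ) (ω : ℝ) (θ φ : ℕ → ℝ) :
    qpp U 1 ω θ φ = ((Rz ω * Ry (θ 0) * Rz (φ 0)) ⊗ₖ (1 : Matrix n n ℂ)) * blockDiag2 Uᴴ 1 *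
      ((Ry (θ 1) * Rz (φ 1)) ⊗ₖ (1 : Matrix n n ℂ)) := by
  simp [qpp, qppEven]

lemma qpp_one_conj_kronecker {U P : Matrix n n ℂ} {a : ℂ} (hP : Pᴴ = P) (hU : Uᴴ * P = a • P)
    (ω : ℝ) (θ φ : ℕ → ℝ) (F : Matrix (Fin 2) (Fin 2) ℂ) :
    qpp U 1 ω θ φ * (F ⊗ₖ P) * (qpp U 1 ω θ φ)ᴴ =
      (Rz ω * Ry (θ 0) * Rz (φ 0) * !![a, 0; 0, 1] * (Ry (θ 1) * Rz (φ 1)) * F *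
        (Rz ω * Ry (θ 0) * Rz (φ 0) * !![a, 0; 0, 1] * (Ry (θ 1) * Rz (φ 1)))ᴴ) ⊗ₖ P := by
  have h1 : (1 : Matrix n n ℂ) * P = (1 : ℂ) • P := by rw [one_mul, one_smul]
  rw [qpp_one]
  generalize Rz ω * Ry (θ 0) * Rz (φ 0) = A
  generalize Ry (θ 1) * Rz (φ 1) = C
  calc (A ⊗ₖ 1) * blockDiag2 Uᴴ 1 * (C ⊗ₖ 1) * (F ⊗ₖ P) *
        ((A ⊗ₖ 1) * blockDiag2 Uᴴ 1 * (C ⊗ₖ 1))ᴴ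
      = (A ⊗ₖ 1) * (blockDiag2 Uᴴ 1 * ((C ⊗ₖ 1) * (F ⊗ₖ P) * (C ⊗ₖ 1)ᴴ) * (blockDiag2 Uᴴ 1)ᴴ) *
          (A ⊗ₖ 1)ᴴ := by
        simp only [Matrix.conjTranspose_mul, Matrix.mul_assoc]
    _ = _ := by
        rw [kronecker_one_conj_kronecker, blockDiag2_conj_kronecker hP hU h1,
          kronecker_one_conj_kronecker]
        simp only [Matrix.conjTranspose_mul, Matrix.mul_assoc]

end BlockDiagonal

lemma Ry_pi_div_two :
    Ry (Real.pi / 2) = ((√2 / 2 : ℝ) : ℂ) • !![1, -1; 1, 1] := by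
  ext i j
  fin_cases i <;> fin_cases j <;>
    simp [Ry, show Real.pi / 2 / 2 = Real.pi / 4 by ring]

lemma Ry_neg_pi_div_two :
    Ry (-(Real.pi / 2)) = ((√2 / 2 : ℝ) : ℂ) • !![1, 1; -1, 1] := by
  ext i j
  fin_cases i <;> fin_cases j <;>
    simp [Ry, show -(Real.pi / 2) / 2 = -(Real.pi / 4) by ring]

lemma trace_Z_mul_conj_E00 (W : Matrix (Fin 2) (Fin 2) ℂ) :
    Matrix.trace (!![1, 0; 0, -1] * (W * !![1, 0; 0, 0] * Wᴴ)) =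
      W 0 0 * star (W 0 0) - W 1 0 * star (W 1 0) := by
  simp only [Matrix.trace_fin_two, Matrix.mul_apply, Fin.sum_univ_two, Matrix.conjTranspose_apply,
    Matrix.of_apply, Matrix.cons_val', Matrix.cons_val_zero, Matrix.cons_val_one,
    Matrix.cons_val_fin_one]
  ring

open Complex ComplexConjugate in
lemma trace_Z_mul_conj_E00_hadamard (μ : ℂ) (φ : ℝ) :
    Matrix.trace (!![1, 0; 0, -1] *
      ((Rz 0 * Ry (-(Real.pi / 2)) * Rz φ * !![star μ, 0; 0, 1] * (Ry (Real.pi / 2) * Rz 0)) *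
        !![1, 0; 0, 0] *
        (Rz 0 * Ry (-(Real.pi / 2)) * Rz φ * !![star μ, 0; 0, 1] * (Ry (Real.pi / 2) * Rz 0))ᴴ)) =
      ((μ * exp (φ * I)).re : ℂ) := by
  have hsqrt : ((√2 : ℝ) : ℂ) ^ 2 = 2 := by
    rw [← ofReal_pow, Real.sq_sqrt zero_le_two, ofReal_ofNat]
  have hx : conj (I * φ / 2) = -(I * φ / 2) := by
    rw [map_div₀, map_mul, conj_I, conj_ofReal, map_ofNat]; ring
  have hexp : exp (φ * I) = exp (I * φ / 2) * exp (I * φ / 2) := by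
    rw [← exp_add]; ring_nf
  rw [trace_Z_mul_conj_E00, re_eq_add_conj]
  simp [Ry_pi_div_two, Ry_neg_pi_div_two, Rz, Matrix.mul_apply, Fin.sum_univ_two, ← exp_conj, hx,
    hexp]
  -- the two sides differ only by the factor `√2 ^ 4 / 4`
  linear_combination (exp (I * φ / 2) * exp (I * φ / 2) * μ +
    exp (-(I * φ / 2)) * exp (-(I * φ / 2)) * conj μ) * ((√2 : ℝ) ^ 2 + 2) / 8 * hsqrt

lemma Matrix.conjTranspose_mulVec_eq_star_smul {n : Type*} [Fintype n] [DecidableEq n]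
    {U : Matrix n n ℂ} (hU : U ∈ Matrix.unitaryGroup n ℂ) {χ : n → ℂ} {z : ℂ}
    (hz : star z * z = 1) (h : U *ᵥ χ = z • χ) : Uᴴ *ᵥ χ = star z • χ := by
  have hχ : z • Uᴴ *ᵥ χ = χ := by
    rw [← Matrix.mulVec_smul, ← h, Matrix.mulVec_mulVec, ← Matrix.star_eq_conjTranspose,
      Matrix.UnitaryGroup.star_mul_self ⟨U, hU⟩, Matrix.one_mulVec]
  calc Uᴴ *ᵥ χ = (star z * z) • Uᴴ *ᵥ χ := by rw [hz, one_smul]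
    _ = star z • χ := by rw [mul_smul, hχ]

lemma hadamardTest_qpp_one_trace {n : Type*} [Fintype n] [DecidableEq n] {U : Matrix n n ℂ}
    (hU : U ∈ Matrix.unitaryGroup n ℂ) {χ : n → ℂ} (hχ : star χ ⬝ᵥ χ = 1) {z : ℂ}
    (hz : star z * z = 1) (heig : U *ᵥ χ = z • χ) (φ₀ : ℝ) :
    Matrix.trace ((!![1, 0; 0, -1] ⊗ₖ (1 : Matrix n n ℂ)) *
      (qpp U 1 0 (fun k => if k = 0 then -(Real.pi / 2) else Real.pi / 2)
          (fun k => if k = 0 then φ₀ else 0) * (!![1, 0; 0, 0] ⊗ₖ Matrix.vecMulVec χ (star χ)) *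
        (qpp U 1 0 (fun k => if k = 0 then -(Real.pi / 2) else Real.pi / 2)
          (fun k => if k = 0 then φ₀ else 0))ᴴ)) =
      ((z * Complex.exp (φ₀ * Complex.I)).re : ℂ) := by
  have hP : (Matrix.vecMulVec χ (star χ))ᴴ = Matrix.vecMulVec χ (star χ) := by
    rw [Matrix.conjTranspose_vecMulVec, star_star]
  have hUP : Uᴴ * Matrix.vecMulVec χ (star χ) = star z • Matrix.vecMulVec χ (star χ) := by
    rw [Matrix.mul_vecMulVec, Matrix.conjTranspose_mulVec_eq_star_smul hU hz heig,
      Matrix.smul_vecMulVec]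
  rw [qpp_one_conj_kronecker hP hUP, trace_kronecker_one_mul_kronecker, Matrix.trace_vecMulVec,
    dotProduct_comm, hχ, mul_one]
  simpa using trace_Z_mul_conj_E00_hadamard z φ₀

/-- QPP generalizes the Hadamard test. A single-layer QPP circuit can realize
both `cos τ = Re⟨χ, Uχ⟩` and `sin τ = Im⟨χ, Uχ⟩` as the `Z`-expectation of the ancilla. -/
theorem stmt_8 (N : ℕ) (U : Matrix (Fin N) (Fin N) ℂ)
    (hU : U ∈ Matrix.unitaryGroup (Fin N) ℂ)
    (χ : Fin N → ℂ) (hχ : ∑ i, ‖χ i‖ ^ 2 = 1) (τ : ℝ)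
    (heig : U.mulVec χ = Complex.exp (Complex.I * τ) • χ) :
    (∃ (ω : ℝ) (θ φ : ℕ → ℝ),
      Matrix.trace
        (((!![1, 0; 0, -1] : Matrix (Fin 2) (Fin 2) ℂ) ⊗ₖ (1 : Matrix (Fin N) (Fin N) ℂ)) *
          (qpp U 1 ω θ φ *
            ((!![1, 0; 0, 0] : Matrix (Fin 2) (Fin 2) ℂ) ⊗ₖ Matrix.vecMulVec χ (star χ)) *
            (qpp U 1 ω θ φ)ᴴ)) = (Real.cos τ : ℂ) ∧
      (Real.cos τ : ℂ) = ((star χ ⬝ᵥ U.mulVec χ).re : ℂ)) ∧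
    (∃ (ω' : ℝ) (θ' φ' : ℕ → ℝ),
      Matrix.trace
        (((!![1, 0; 0, -1] : Matrix (Fin 2) (Fin 2) ℂ) ⊗ₖ (1 : Matrix (Fin N) (Fin N) ℂ)) *
          (qpp U 1 ω' θ' φ' *
            ((!![1, 0; 0, 0] : Matrix (Fin 2) (Fin 2) ℂ) ⊗ₖ Matrix.vecMulVec χ (star χ)) *
            (qpp U 1 ω' θ' φ')ᴴ)) = (Real.sin τ : ℂ) ∧
      (Real.sin τ : ℂ) = ((star χ ⬝ᵥ U.mulVec χ).im : ℂ)) := by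
  have hz : star (Complex.exp (Complex.I * τ)) * Complex.exp (Complex.I * τ) = 1 := by
    rw [Complex.star_def, Complex.conj_mul', mul_comm, Complex.norm_exp_ofReal_mul_I]
    norm_num
  have hnorm : star χ ⬝ᵥ χ = 1 := by
    simp only [dotProduct, Pi.star_apply, Complex.star_def, Complex.conj_mul']
    exact_mod_cast hχ
  have hinner : star χ ⬝ᵥ U *ᵥ χ = Complex.exp (Complex.I * τ) := by
    rw [heig, dotProduct_smul, hnorm, smul_eq_mul, mul_one]
  have key := hadamardTest_qpp_one_trace hU hnorm hz heig
  refine ⟨⟨0, _, _, (key 0).trans ?_, ?_⟩, ⟨0, _, _, (key (-(Real.pi / 2))).trans ?_, ?_⟩⟩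
  · simp [mul_comm Complex.I, Complex.exp_ofReal_mul_I_re]
  · rw [hinner, mul_comm, Complex.exp_ofReal_mul_I_re]
  · rw [show ((-(Real.pi / 2) : ℝ) : ℂ) = -Real.pi / 2 by push_cast; ring,
      Complex.exp_neg_pi_div_two_mul_I]
    simp [mul_comm Complex.I, Complex.exp_ofReal_mul_I_im]
  · rw [hinner, mul_comm, Complex.exp_ofReal_mul_I_im]
end

section
/- Let γ ∈ (0,1) and ε > 0, and let ρ be a d×d density matrix all of whose nonzero eigenvalues lie in the interval [γ, 1]. Let P : ℝ → ℝ be a polynomial such that |P(x) − (−ln x)/(2 ln(1/γ))| ≤ ε/(4 ln(1/γ)) for all x ∈ [γ, 1], and let E ∈ ℝ satisfy |E − tr(ρ · P(ρ))| ≤ ε/(4 ln(1/γ)). Then |2 ln(1/γ) · E − S(ρ)| ≤ ε. -/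
/-!
Write `c = 2 ln(1/γ)` and `f(x) = -ln x / c`. Then `S(ρ) = c · Σ_{p_j > 0} p_j f(p_j)`, while
`tr(ρ P(ρ)) = Σ_{p_j > 0} p_j P(p_j)` is an average, with weights `p_j` summing to `1`, of values
each within `δ = ε / (4 ln(1/γ))` of `f(p_j)`. Hence `E` is within `2δ` of `S(ρ) / c`, and
multiplying by `c` gives the error `c · 2δ = ε`.
-/

open Finset
open scoped ComplexOrder

theorem Matrix.IsHermitian.sum_eigenvalues_eq_re_trace {𝕜 n : Type*} [RCLike 𝕜] [Fintype n]
    [DecidableEq n] {A : Matrix n n 𝕜} (hA : A.IsHermitian) :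
    ∑ i, hA.eigenvalues i = RCLike.re A.trace := by
  simp [hA.trace_eq_sum_eigenvalues]

theorem abs_sum_mul_sub_sum_mul_le {ι : Type*} {s : Finset ι} {w f g : ι → ℝ} {δ : ℝ}
    (hw : ∀ i ∈ s, 0 ≤ w i) (hw1 : ∑ i ∈ s, w i = 1) (hfg : ∀ i ∈ s, |f i - g i| ≤ δ) :
    |∑ i ∈ s, w i * f i - ∑ i ∈ s, w i * g i| ≤ δ :=
  calc |∑ i ∈ s, w i * f i - ∑ i ∈ s, w i * g i|
      = |∑ i ∈ s, w i * (f i - g i)| := by simp only [mul_sub, sum_sub_distrib]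
    _ ≤ ∑ i ∈ s, |w i * (f i - g i)| := abs_sum_le_sum_abs _ _
    _ ≤ ∑ i ∈ s, w i * δ := sum_le_sum fun i hi => by
        rw [abs_mul, abs_of_nonneg (hw i hi)]
        exact mul_le_mul_of_nonneg_left (hfg i hi) (hw i hi)
    _ = δ := by rw [← sum_mul, hw1, one_mul]

theorem stmt_12_general (d : ℕ) (γ ε E : ℝ)
    (hγ : γ ∈ Set.Ioo (0 : ℝ) 1)
    (ρ : Matrix (Fin d) (Fin d) ℂ) (hρ : ρ.PosSemidef) (htr : ρ.trace = 1)
    (heigbound : ∀ j, hρ.1.eigenvalues j ≠ 0 → hρ.1.eigenvalues j ∈ Set.Icc γ 1)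
    (P : Polynomial ℝ)
    (hP : ∀ x ∈ Set.Icc γ 1,
      |P.eval x - (-Real.log x) / (2 * Real.log (1 / γ))| ≤ ε / (4 * Real.log (1 / γ)))
    (hE : |E - ∑ j, hρ.1.eigenvalues j * P.eval (hρ.1.eigenvalues j)|
        ≤ ε / (4 * Real.log (1 / γ))) :
    |2 * Real.log (1 / γ) * E -
        (-∑ j ∈ Finset.univ.filter (fun j => 0 < hρ.1.eigenvalues j),
            hρ.1.eigenvalues j * Real.log (hρ.1.eigenvalues j))| ≤ ε := by
  set p := hρ.1.eigenvalues
  set c := 2 * Real.log (1 / γ)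
  have hL : 0 < Real.log (1 / γ) := Real.log_pos (one_lt_one_div hγ.1 hγ.2)
  have hc : 0 < c := by positivity
  have hpos : ∀ j, p j ≠ 0 → 0 < p j := fun j hj => (hρ.eigenvalues_nonneg j).lt_of_ne' hj
  set s := univ.filter (fun j => 0 < p j)
  have hs : ∑ j ∈ s, p j = 1 := by
    rw [sum_filter_of_ne fun j _ => hpos j, hρ.1.sum_eigenvalues_eq_re_trace, htr, RCLike.one_re]
  have hT : ∑ j ∈ s, p j * P.eval (p j) = ∑ j, p j * P.eval (p j) :=
    sum_filter_of_ne fun j _ hj => hpos j (left_ne_zero_of_mul hj)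
  have hS : -∑ j ∈ s, p j * Real.log (p j) = c * ∑ j ∈ s, p j * (-Real.log (p j) / c) := by
    rw [mul_sum, ← sum_neg_distrib]
    exact sum_congr rfl fun j _ => by field_simp
  have hP_avg : |∑ j ∈ s, p j * P.eval (p j) - ∑ j ∈ s, p j * (-Real.log (p j) / c)|
      ≤ ε / (4 * Real.log (1 / γ)) :=
    abs_sum_mul_sub_sum_mul_le (fun j _ => hρ.eigenvalues_nonneg j) hs
      fun j hj => hP _ (heigbound j (mem_filter.1 hj).2.ne')
  rw [hS, ← mul_sub, abs_mul, abs_of_pos hc]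
  calc c * |E - ∑ j ∈ s, p j * (-Real.log (p j) / c)|
      ≤ c * (ε / (4 * Real.log (1 / γ)) + ε / (4 * Real.log (1 / γ))) := by
        gcongr
        exact (abs_sub_le _ _ _).trans (add_le_add (hT ▸ hE) hP_avg)
    _ = ε := by
        simp only [c]
        field_simp
        ring

/-- error propagation in QPP-based von Neumann entropy estimation.
If `P` approximates `(-ln x)/(2 ln(1/γ))` on `[γ,1]` within `ε/(4 ln(1/γ))` and `E`
approximates `tr(ρ·P(ρ)) = Σ_j p_j P(p_j)` within `ε/(4 ln(1/γ))`, then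
`2 ln(1/γ)·E` approximates `S(ρ)` within `ε`. -/
theorem stmt_12 (d : ℕ) (γ ε E : ℝ)
    (hγ : γ ∈ Set.Ioo (0 : ℝ) 1) (hε : 0 < ε)
    (ρ : Matrix (Fin d) (Fin d) ℂ) (hρ : ρ.PosSemidef) (htr : ρ.trace = 1)
    (heigbound : ∀ j, hρ.1.eigenvalues j ≠ 0 → hρ.1.eigenvalues j ∈ Set.Icc γ 1)
    (P : Polynomial ℝ)
    (hP : ∀ x ∈ Set.Icc γ 1,
      |P.eval x - (-Real.log x) / (2 * Real.log (1 / γ))| ≤ ε / (4 * Real.log (1 / γ)))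
    (hE : |E - ∑ j, hρ.1.eigenvalues j * P.eval (hρ.1.eigenvalues j)|
        ≤ ε / (4 * Real.log (1 / γ))) :
    |2 * Real.log (1 / γ) * E -
        (-∑ j ∈ Finset.univ.filter (fun j => 0 < hρ.1.eigenvalues j),
            hρ.1.eigenvalues j * Real.log (hρ.1.eigenvalues j))| ≤ ε :=
  stmt_12_general d γ ε E hγ ρ hρ htr heigbound P hP hE
end

section
/- Let α ∈ (0,1), γ ∈ (0,1) and ε' > 0, and let ρ be a density matrix all of whose nonzero eigenvalues lie in [γ, 1]. Let P : ℝ → ℝ be a polynomial such that |P(x) − (γ^{1−α}/2)·x^{α−1}| ≤ (γ^{1−α}/4)·ε' for all x ∈ [γ, 1], and let E ∈ ℝ satisfy |E − tr(ρ · P(ρ))| ≤ (γ^{1−α}/4)·ε'. Then |2 γ^{α−1} E − tr(ρ^α)| ≤ ε'. -/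
open scoped ComplexOrder

/-!
On the nonzero eigenvalues `p ∈ [γ, 1]` one has `p^α = p · p^{α-1}`, so `tr(ρ P(ρ))` and
`(γ^{1-α}/2) tr(ρ^α)` are both averages against the probability weights `p_j`, of `P(p_j)` and of
`(γ^{1-α}/2) p_j^{α-1}`; they therefore differ by at most the uniform error `(γ^{1-α}/4) ε'`.
Adding the error of `E` and rescaling by `(γ^{1-α}/2)⁻¹ = 2 γ^{α-1}` gives the bound `ε'`.
-/

lemma Matrix.IsHermitian.sum_eigenvalues_eq_one {𝕜 n : Type*} [RCLike 𝕜] [Fintype n]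
    [DecidableEq n] {A : Matrix n n 𝕜} (hA : A.IsHermitian) (htr : A.trace = 1) :
    ∑ i, hA.eigenvalues i = 1 := by
  have h := hA.trace_eq_sum_eigenvalues
  rw [htr] at h
  exact_mod_cast h.symm

lemma abs_sum_mul_sub_sum_mul_le_s14 {ι : Type*} [Fintype ι] {p a b : ι → ℝ} {K : ℝ}
    (hp : ∀ i, 0 ≤ p i) (hsum : ∑ i, p i = 1) (hab : ∀ i, p i ≠ 0 → |a i - b i| ≤ K) :
    |∑ i, p i * a i - ∑ i, p i * b i| ≤ K := by
  have hterm : ∀ i, |p i * (a i - b i)| ≤ p i * K := by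
    intro i
    rw [abs_mul, abs_of_nonneg (hp i)]
    by_cases h0 : p i = 0
    · simp [h0]
    · exact mul_le_mul_of_nonneg_left (hab i h0) (hp i)
  calc |∑ i, p i * a i - ∑ i, p i * b i| = |∑ i, p i * (a i - b i)| := by
        simp only [mul_sub, Finset.sum_sub_distrib]
    _ ≤ ∑ i, |p i * (a i - b i)| := Finset.abs_sum_le_sum_abs _ _
    _ ≤ ∑ i, p i * K := Finset.sum_le_sum fun i _ => hterm i
    _ = K := by rw [← Finset.sum_mul, hsum, one_mul]

lemma abs_inv_mul_sub_le {c E S T ε : ℝ} (hc : 0 < c) (hE : |E - S| ≤ c * ε / 2)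
    (hS : |S - c * T| ≤ c * ε / 2) : |c⁻¹ * E - T| ≤ ε := by
  have hsplit : c⁻¹ * E - T = c⁻¹ * ((E - S) + (S - c * T)) := by
    field_simp
    ring
  calc |c⁻¹ * E - T| = c⁻¹ * |(E - S) + (S - c * T)| := by
        rw [hsplit, abs_mul, abs_of_pos (inv_pos.mpr hc)]
    _ ≤ c⁻¹ * (c * ε) := by
        gcongr
        linarith [abs_add_le (E - S) (S - c * T)]
    _ = ε := by field_simp

theorem stmt_14_general (d : ℕ) (α γ ε' E : ℝ)
    (hα : α ∈ Set.Ioo (0 : ℝ) 1) (hγ : γ ∈ Set.Ioo (0 : ℝ) 1)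
    (ρ : Matrix (Fin d) (Fin d) ℂ) (hρ : ρ.PosSemidef) (htr : ρ.trace = 1)
    (heigbound : ∀ j, hρ.1.eigenvalues j ≠ 0 → hρ.1.eigenvalues j ∈ Set.Icc γ 1)
    (P : Polynomial ℝ)
    (hP : ∀ x ∈ Set.Icc γ 1,
      |P.eval x - γ ^ (1 - α) / 2 * x ^ (α - 1)| ≤ γ ^ (1 - α) / 4 * ε')
    (hE : |E - ∑ j, hρ.1.eigenvalues j * P.eval (hρ.1.eigenvalues j)|
        ≤ γ ^ (1 - α) / 4 * ε') :
    |2 * γ ^ (α - 1) * E - ∑ j, hρ.1.eigenvalues j ^ α| ≤ ε' := by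
  set p := hρ.1.eigenvalues
  set c := γ ^ (1 - α) / 2
  have hc : 0 < c := div_pos (Real.rpow_pos_of_pos hγ.1 _) two_pos
  have hscale : 2 * γ ^ (α - 1) = c⁻¹ := by
    rw [inv_div, show α - 1 = -(1 - α) by ring, Real.rpow_neg hγ.1.le, div_eq_mul_inv]
  have herr : γ ^ (1 - α) / 4 * ε' = c * ε' / 2 := by ring
  have hpow : ∀ j, p j ^ α = p j * p j ^ (α - 1) := fun j => by
    rw [← Real.rpow_one_add' (hρ.eigenvalues_nonneg j) (by linarith [hα.1]), add_sub_cancel]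
  have hS : |∑ j, p j * P.eval (p j) - c * ∑ j, p j ^ α| ≤ c * ε' / 2 := by
    simp only [hpow, Finset.mul_sum, mul_left_comm c]
    rw [← herr]
    exact abs_sum_mul_sub_sum_mul_le_s14 hρ.eigenvalues_nonneg
      (hρ.1.sum_eigenvalues_eq_one htr) fun j hj => hP _ (heigbound j hj)
  rw [hscale]
  exact abs_inv_mul_sub_le hc (herr ▸ hE) hS

/-- error propagation in QPP-based Rényi entropy estimation for `α ∈ (0,1)`.
If `P` approximates `(γ^{1−α}/2)·x^{α−1}` on `[γ,1]` within `(γ^{1−α}/4)·ε'` and `E`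
approximates `tr(ρ·P(ρ)) = Σ_j p_j P(p_j)` within `(γ^{1−α}/4)·ε'`, then
`2γ^{α−1}·E` approximates `tr(ρ^α) = Σ_j p_j^α` within `ε'`. -/
theorem stmt_14 (d : ℕ) (α γ ε' E : ℝ)
    (hα : α ∈ Set.Ioo (0 : ℝ) 1) (hγ : γ ∈ Set.Ioo (0 : ℝ) 1) (hε : 0 < ε')
    (ρ : Matrix (Fin d) (Fin d) ℂ) (hρ : ρ.PosSemidef) (htr : ρ.trace = 1)
    (heigbound : ∀ j, hρ.1.eigenvalues j ≠ 0 → hρ.1.eigenvalues j ∈ Set.Icc γ 1)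
    (P : Polynomial ℝ)
    (hP : ∀ x ∈ Set.Icc γ 1,
      |P.eval x - γ ^ (1 - α) / 2 * x ^ (α - 1)| ≤ γ ^ (1 - α) / 4 * ε')
    (hE : |E - ∑ j, hρ.1.eigenvalues j * P.eval (hρ.1.eigenvalues j)|
        ≤ γ ^ (1 - α) / 4 * ε') :
    |2 * γ ^ (α - 1) * E - ∑ j, hρ.1.eigenvalues j ^ α| ≤ ε' :=
  stmt_14_general d α γ ε' E hα hγ ρ hρ htr heigbound P hP hE
end

section
/- For every β ∈ [0,1] and every γ ∈ (0,2], the series Σ_{l=0}^{∞} |C(β, l)| · (1 − γ/2)^l converges and satisfies Σ_{l=0}^{∞} |C(β, l)| · (1 − γ/2)^l ≤ 1 + β·ln(2/γ) ≤ ln(2e/γ). -/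
/-!
Since `C(β, l + 1) = C(β, l) · (β − l)/(l + 1)` and `|β − l| ≤ l` for `l ≥ 1`, induction gives
`|C(β, l)| ≤ β / l` for `l ≥ 1`. Comparing termwise with `1 + β Σ_{l ≥ 1} x^l / l = 1 − β log (1 − x)`
at `x = 1 − γ/2` yields convergence and the first bound; the second is `β log (2/γ) ≤ log (2/γ)`.
-/

/-- The generalized binomial coefficient `C(β, l) = β(β−1)⋯(β−l+1)/l!`. -/
noncomputable def genBinom (β : ℝ) (l : ℕ) : ℝ :=
  (∏ i ∈ Finset.range l, (β - i)) / (Nat.factorial l)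

@[simp]
lemma genBinom_zero (β : ℝ) : genBinom β 0 = 1 := by
  simp [genBinom]

lemma genBinom_succ (β : ℝ) (l : ℕ) :
    genBinom β (l + 1) = genBinom β l * (β - l) / (l + 1) := by
  simp only [genBinom, Finset.prod_range_succ, Nat.factorial_succ, Nat.cast_mul, Nat.cast_succ]
  field_simp

lemma abs_genBinom_succ_le {β : ℝ} (hβ0 : 0 ≤ β) (hβ1 : β ≤ 1) (l : ℕ) :
    |genBinom β (l + 1)| ≤ β / (l + 1) := by
  induction l with
  | zero => simp [genBinom_succ, abs_of_nonneg hβ0]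
  | succ l ih =>
    have hl : |β - (l + 1 : ℕ)| ≤ l + 1 := by
      rw [abs_sub_comm, abs_of_nonneg (by push_cast; linarith)]
      push_cast
      linarith
    calc |genBinom β (l + 1 + 1)| = |genBinom β (l + 1)| * |β - (l + 1 : ℕ)| / (l + 1 + 1) := by
          rw [genBinom_succ, abs_div, abs_mul, abs_of_pos (by positivity : (0 : ℝ) < (l + 1 : ℕ) + 1)]
          push_cast
          ring
      _ ≤ β / (l + 1) * (l + 1) / (l + 1 + 1) := by gcongr
      _ = β / ((l + 1 : ℕ) + 1) := by
          field_simp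
          push_cast
          ring

section PowerSeries

variable {β x : ℝ}

lemma hasSum_mul_pow_succ_div (β : ℝ) (hx0 : 0 ≤ x) (hx1 : x < 1) :
    HasSum (fun n : ℕ => β * (x ^ (n + 1) / (n + 1))) (-(β * Real.log (1 - x))) := by
  rw [← mul_neg]
  exact (Real.hasSum_pow_div_log_of_abs_lt_one (abs_lt.mpr ⟨by linarith, hx1⟩)).mul_left β

lemma abs_genBinom_succ_mul_pow_le (hβ0 : 0 ≤ β) (hβ1 : β ≤ 1) (hx0 : 0 ≤ x) (n : ℕ) :
    |genBinom β (n + 1)| * x ^ (n + 1) ≤ β * (x ^ (n + 1) / (n + 1)) := by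
  rw [← mul_div_assoc, mul_div_right_comm]
  gcongr
  exact abs_genBinom_succ_le hβ0 hβ1 n

lemma summable_abs_genBinom_mul_pow (hβ0 : 0 ≤ β) (hβ1 : β ≤ 1) (hx0 : 0 ≤ x) (hx1 : x < 1) :
    Summable (fun l : ℕ => |genBinom β l| * x ^ l) := by
  refine (summable_nat_add_iff 1).mp ?_
  exact (hasSum_mul_pow_succ_div β hx0 hx1).summable.of_nonneg_of_le (fun n => by positivity)
    (abs_genBinom_succ_mul_pow_le hβ0 hβ1 hx0)

lemma tsum_abs_genBinom_mul_pow_le (hβ0 : 0 ≤ β) (hβ1 : β ≤ 1) (hx0 : 0 ≤ x) (hx1 : x < 1) :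
    ∑' l : ℕ, |genBinom β l| * x ^ l ≤ 1 - β * Real.log (1 - x) := by
  have hmaj := hasSum_mul_pow_succ_div β hx0 hx1
  have htail : Summable (fun n : ℕ => |genBinom β (n + 1)| * x ^ (n + 1)) :=
    (summable_nat_add_iff 1).mpr (summable_abs_genBinom_mul_pow hβ0 hβ1 hx0 hx1)
  rw [(summable_abs_genBinom_mul_pow hβ0 hβ1 hx0 hx1).tsum_eq_zero_add, sub_eq_add_neg]
  simp only [genBinom_zero, abs_one, pow_zero, mul_one]
  gcongr
  exact hmaj.tsum_eq ▸ htail.tsum_le_tsum (abs_genBinom_succ_mul_pow_le hβ0 hβ1 hx0) hmaj.summable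

end PowerSeries

lemma one_add_mul_log_le_log_mul_exp {β y : ℝ} (hβ1 : β ≤ 1) (hy : 1 ≤ y) :
    1 + β * Real.log y ≤ Real.log (y * Real.exp 1) := by
  rw [Real.log_mul (by positivity) (Real.exp_ne_zero 1), Real.log_exp]
  nlinarith [Real.log_nonneg hy]

/-- for `β ∈ [0,1]` and `γ ∈ (0,2]`, the series
`Σ_l |C(β,l)|·(1−γ/2)^l` converges and is at most `1 + β·ln(2/γ) ≤ ln(2e/γ)`. -/
theorem stmt_15 (β γ : ℝ) (hβ : β ∈ Set.Icc (0 : ℝ) 1) (hγ : γ ∈ Set.Ioc (0 : ℝ) 2) :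
    Summable (fun l : ℕ => |genBinom β l| * (1 - γ / 2) ^ l) ∧
    (∑' l : ℕ, |genBinom β l| * (1 - γ / 2) ^ l) ≤ 1 + β * Real.log (2 / γ) ∧
    1 + β * Real.log (2 / γ) ≤ Real.log (2 * Real.exp 1 / γ) := by
  obtain ⟨hβ0, hβ1⟩ := hβ
  obtain ⟨hγ0, hγ2⟩ := hγ
  have hx0 : 0 ≤ 1 - γ / 2 := by linarith
  have hx1 : 1 - γ / 2 < 1 := by linarith
  have hlog : -Real.log (1 - (1 - γ / 2)) = Real.log (2 / γ) := by
    rw [sub_sub_cancel, ← Real.log_inv, inv_div]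
  refine ⟨summable_abs_genBinom_mul_pow hβ0 hβ1 hx0 hx1, ?_, ?_⟩
  · calc ∑' l : ℕ, |genBinom β l| * (1 - γ / 2) ^ l
        ≤ 1 - β * Real.log (1 - (1 - γ / 2)) := tsum_abs_genBinom_mul_pow_le hβ0 hβ1 hx0 hx1
      _ = 1 + β * Real.log (2 / γ) := by rw [← hlog]; ring
  · rw [mul_comm 2, mul_div_assoc, mul_comm (Real.exp 1)]
    exact one_add_mul_log_le_log_mul_exp hβ1 ((one_le_div hγ0).mpr hγ2)
end
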